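/- arXiv:2506.23251 — 6 statements merged into one kernel-verified Lean document; each statement's English description precedes it below -/
import Mathlib

section
/- Let L/K be a finite Galois extension of fields with Galois group G = Gal(L/K), and let V be a K-vector space. Equip L ⊗_K V with the K-structure given by φ_σ(a ⊗ v) = σ(a) ⊗ v for σ ∈ G. Then the K-linear map V → (L ⊗_K V)^G sending v to 1 ⊗ v is bijective. -/
/-!
Injectivity of `v ↦ 1 ⊗ v` holds because `V` is flat over `K`. For surjectivity, expand an invariant
`x` in the `L`-basis `1 ⊗ bᵢ` coming from a `K`-basis `b` of `V`: `φ_σ` acts on the coordinates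
by `σ`, so they are fixed by the whole Galois group and hence lie in `K`, i.e. `x = 1 ⊗ v`.
-/

open scoped TensorProduct

namespace Module.Basis

variable {R A B M ι : Type*} [CommSemiring R] [Semiring A] [Semiring B] [Algebra R A]
  [Algebra R B] [AddCommMonoid M] [Module R M]

theorem baseChange_repr_rTensor (b : Basis ι R M) (f : A →ₗ[R] B) (x : A ⊗[R] M) (i : ι) :
    (b.baseChange B).repr (f.rTensor M x) i = f ((b.baseChange A).repr x i) := by
  induction x using TensorProduct.induction_on with
  | zero => simp
  | tmul a v => simp
  | add x y hx hy => simp [hx, hy]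

theorem mem_range_mk_one_of_repr_mem (b : Basis ι R M) {x : A ⊗[R] M}
    (hx : ∀ i, (b.baseChange A).repr x i ∈ Set.range (algebraMap R A)) :
    x ∈ LinearMap.range (TensorProduct.mk R A M 1) := by
  rw [← (b.baseChange A).linearCombination_repr x, Finsupp.linearCombination_apply]
  refine Submodule.finsuppSum_mem _ _ _ _ fun i _ => ?_
  obtain ⟨r, hr⟩ := hx i
  rw [← hr, baseChange_apply, algebraMap_smul, ← TensorProduct.tmul_smul]
  exact ⟨r • b i, rfl⟩

end Module.Basis

/-- **Galois descent, easy direction.**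
Let `L/K` be a finite Galois extension with `G = Gal(L/K)` and `V` a
`K`-vector space. Equip `L ⊗[K] V` with the `K`-structure whose semilinear
maps are `φ_σ(a ⊗ v) = σ(a) ⊗ v` (i.e. `φ_σ = rTensor V σ`). Then the map
`V → (L ⊗[K] V)^G`, `v ↦ 1 ⊗ v`, is bijective. -/
theorem stmt_0 (K L : Type*) [Field K] [Field L] [Algebra K L]
    [IsGalois K L]
    (V : Type*) [AddCommGroup V] [Module K V] :
    Function.Bijective (fun v : V =>
      (⟨(1 : L) ⊗ₜ[K] v, fun σ : L ≃ₐ[K] L => by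
          simp [LinearMap.rTensor_tmul]⟩ :
        {x : L ⊗[K] V // ∀ σ : L ≃ₐ[K] L,
          LinearMap.rTensor V σ.toLinearMap x = x})) := by
  refine ⟨fun v w h =>
    Module.Flat.tensorProduct_mk_injective (R := K) (S := L) (M := V) (congrArg Subtype.val h), ?_⟩
  rintro ⟨x, hx⟩
  let b := Module.Basis.ofVectorSpace K V
  have hcoord_fixed (i) (σ : L ≃ₐ[K] L) :
      σ ((b.baseChange L).repr x i) = (b.baseChange L).repr x i := by
    rw [← AlgEquiv.toLinearMap_apply, ← b.baseChange_repr_rTensor, hx σ]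
  obtain ⟨v, rfl⟩ := b.mem_range_mk_one_of_repr_mem fun i =>
    (InfiniteGalois.mem_range_algebraMap_iff_fixed _).2 (hcoord_fixed i)
  exact ⟨v, rfl⟩
end

section
/- Let L/K be a finite Galois extension of fields with Galois group G = Gal(L/K), and let V be an L-vector space equipped with a K-structure (φ_σ)_{σ∈G}. Then the L-linear map L ⊗_K V^G → V sending a ⊗ v to a·v is bijective. -/
open scoped TensorProduct

/-! Take a `K`-basis `(b τ)` of `L` indexed by `G`. By Dedekind's independence of characters the
matrix `(σ (b τ))` is invertible, so there are `c τ ∈ L` with `∑ τ, σ (b τ) * c τ = δ_{σ,1}`.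
The twisted traces `∑ σ, φ σ w` are `G`-invariant, and `v ↦ ∑ τ, c τ ⊗ ∑ σ, φ σ (b τ • v)` inverts
`a ⊗ v ↦ a • v`: one composite is `v ↦ ∑ σ, δ_{σ,1} • φ σ v = v`; for the other, the twisted trace
of `x • s` with `s` invariant is `Tr_{L/K}(x) • s`, which reduces it to
`∑ τ, Tr_{L/K}(b τ * a) * c τ = ∑ σ, σ a * δ_{σ,1} = a`. -/

section OrbitSum

variable {G V : Type*} [AddCommMonoid V] {φ : G → V ≃+ V}

variable (φ) in
def orbitSum [Fintype G] : V →+ V := ∑ σ, (φ σ).toAddMonoidHom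

theorem orbitSum_apply [Fintype G] (v : V) : orbitSum φ v = ∑ σ, φ σ v := by
  simp [orbitSum, AddMonoidHom.finsetSum_apply]

theorem apply_one_eq_self [MulOneClass G] (hcoc : ∀ σ τ v, φ σ (φ τ v) = φ (σ * τ) v)
    (v : V) : φ 1 v = v :=
  (φ 1).injective (by rw [hcoc, one_mul])

theorem apply_orbitSum [Group G] [Fintype G] (hcoc : ∀ σ τ v, φ σ (φ τ v) = φ (σ * τ) v)
    (ρ : G) (v : V) : φ ρ (orbitSum φ v) = orbitSum φ v := by
  simp only [orbitSum_apply, map_sum, hcoc]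
  exact Equiv.sum_comp (Equiv.mulLeft ρ) (φ · v)

end OrbitSum

section Galois

variable {K L : Type*} [Field K] [Field L] [Algebra K L] [FiniteDimensional K L]

open Classical in
theorem isUnit_aut_apply_basis (b : Module.Basis Gal(L/K) K L) :
    IsUnit (Matrix.of fun σ τ : Gal(L/K) => σ (b τ)) := by
  rw [← Matrix.linearIndependent_rows_iff_isUnit]
  have hσ : LinearIndependent L fun σ : Gal(L/K) => (σ : L →ₐ[K] L).toLinearMap :=
    (linearIndependent_toLinearMap K L L).comp _ AlgEquiv.coe_toAlgHom_injective
  exact hσ.map' (b.constr L).symm.toLinearMap (LinearEquiv.ker _)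

variable (K L) in
theorem exists_sum_apply_mul_eq_one_and_eq_zero [IsGalois K L] :
    ∃ b c : Gal(L/K) → L, ∑ τ, b τ * c τ = 1 ∧ ∀ σ : Gal(L/K), σ ≠ 1 → ∑ τ, σ (b τ) * c τ = 0 := by
  classical
  have hcard : Fintype.card (Fin (Module.finrank K L)) = Fintype.card Gal(L/K) := by
    rw [Fintype.card_fin, ← Nat.card_eq_fintype_card, IsGalois.card_aut_eq_finrank]
  let b := (Module.finBasis K L).reindex (Fintype.equivOfCardEq hcard)
  obtain ⟨c, hc⟩ := Matrix.mulVec_surjective_iff_isUnit.mpr (isUnit_aut_apply_basis b)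
    (Pi.single (1 : Gal(L/K)) 1)
  refine ⟨b, c, ?_, fun σ hσ => ?_⟩
  · simpa [Matrix.mulVec, dotProduct] using congrFun hc 1
  · simpa [Matrix.mulVec, dotProduct, hσ] using congrFun hc σ

theorem sum_trace_mul_smul [IsGalois K L] {ι : Type*} [Fintype ι] {b c : ι → L}
    (hb1 : ∑ i, b i * c i = 1) (hb0 : ∀ σ : Gal(L/K), σ ≠ 1 → ∑ i, σ (b i) * c i = 0) (a : L) :
    ∑ i, Algebra.trace K L (b i * a) • c i = a := by
  calc ∑ i, Algebra.trace K L (b i * a) • c i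
      = ∑ σ : Gal(L/K), σ a * ∑ i, σ (b i) * c i := by
        simp only [Algebra.smul_def, trace_eq_sum_automorphisms, map_mul, Finset.sum_mul,
          Finset.mul_sum]
        rw [Finset.sum_comm]
        refine Finset.sum_congr rfl fun σ _ => Finset.sum_congr rfl fun i _ => by ring
    _ = a := by
      rw [Fintype.sum_eq_single 1 fun σ hσ => by rw [hb0 σ hσ, mul_zero]]
      simp only [AlgEquiv.one_apply, hb1, mul_one]

end Galois

section Descent

variable {K L V : Type*} [Field K] [Field L] [Algebra K L] [FiniteDimensional K L]
  [AddCommGroup V] [Module L V] {φ : Gal(L/K) → V ≃+ V}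
  {ι : Type*} [Fintype ι] {b c : ι → L}

theorem orbitSum_smul (hsemi : ∀ σ (a : L) v, φ σ (a • v) = σ a • φ σ v) (a : L) (v : V) :
    orbitSum φ (a • v) = ∑ σ, σ a • φ σ v := by
  simp only [orbitSum_apply, hsemi]

theorem orbitSum_smul_of_forall_apply_eq [Module K V] [IsScalarTower K L V] [IsGalois K L]
    (hsemi : ∀ σ (a : L) v, φ σ (a • v) = σ a • φ σ v) {v : V} (hv : ∀ σ, φ σ v = v) (a : L) :
    orbitSum φ (a • v) = Algebra.trace K L a • v := by
  simp only [orbitSum_smul hsemi, hv, ← Finset.sum_smul, ← trace_eq_sum_automorphisms,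
    algebraMap_smul]

theorem sum_smul_orbitSum_smul (hsemi : ∀ σ (a : L) v, φ σ (a • v) = σ a • φ σ v)
    (hcoc : ∀ σ τ v, φ σ (φ τ v) = φ (σ * τ) v) (hb1 : ∑ i, b i * c i = 1)
    (hb0 : ∀ σ : Gal(L/K), σ ≠ 1 → ∑ i, σ (b i) * c i = 0) (v : V) :
    ∑ i, c i • orbitSum φ (b i • v) = v := by
  calc ∑ i, c i • orbitSum φ (b i • v) = ∑ σ : Gal(L/K), (∑ i, σ (b i) * c i) • φ σ v := by
        simp only [orbitSum_smul hsemi, Finset.smul_sum, Finset.sum_smul, smul_smul]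
        rw [Finset.sum_comm]
        simp only [mul_comm]
    _ = φ 1 v := by
      rw [Fintype.sum_eq_single 1 fun σ hσ => by rw [hb0 σ hσ, zero_smul]]
      simp only [AlgEquiv.one_apply, hb1, one_smul]
    _ = v := apply_one_eq_self hcoc v

variable [Module K V] [IsScalarTower K L V] {S : Submodule K V}

variable (b c) in
noncomputable def descentInv (hcoc : ∀ σ τ v, φ σ (φ τ v) = φ (σ * τ) v)
    (hS : ∀ v, v ∈ S ↔ ∀ σ, φ σ v = v) : V →+ L ⊗[K] S :=
  AddMonoidHom.mk'
    (fun v => ∑ i, c i ⊗ₜ ⟨orbitSum φ (b i • v), (hS _).2 (apply_orbitSum hcoc · _)⟩)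
    fun v w => by
      simp only [smul_add, ← Finset.sum_add_distrib, ← TensorProduct.tmul_add]
      congr! 3
      exact map_add _ _ _

theorem liftBaseChange_descentInv (hsemi : ∀ σ (a : L) v, φ σ (a • v) = σ a • φ σ v)
    (hcoc : ∀ σ τ v, φ σ (φ τ v) = φ (σ * τ) v) (hS : ∀ v, v ∈ S ↔ ∀ σ, φ σ v = v)
    (hb1 : ∑ i, b i * c i = 1) (hb0 : ∀ σ : Gal(L/K), σ ≠ 1 → ∑ i, σ (b i) * c i = 0) (v : V) :
    LinearMap.liftBaseChange L S.subtype (descentInv b c hcoc hS v) = v := by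
  simp only [descentInv, AddMonoidHom.mk'_apply, map_sum, LinearMap.liftBaseChange_tmul,
    Submodule.subtype_apply]
  exact sum_smul_orbitSum_smul hsemi hcoc hb1 hb0 v

theorem descentInv_liftBaseChange [IsGalois K L]
    (hsemi : ∀ σ (a : L) v, φ σ (a • v) = σ a • φ σ v)
    (hcoc : ∀ σ τ v, φ σ (φ τ v) = φ (σ * τ) v) (hS : ∀ v, v ∈ S ↔ ∀ σ, φ σ v = v)
    (hb1 : ∑ i, b i * c i = 1) (hb0 : ∀ σ : Gal(L/K), σ ≠ 1 → ∑ i, σ (b i) * c i = 0)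
    (x : L ⊗[K] S) :
    descentInv b c hcoc hS (LinearMap.liftBaseChange L S.subtype x) = x := by
  induction x using TensorProduct.induction_on with
  | zero => simp only [map_zero]
  | add x y hx hy => rw [map_add, map_add, hx, hy]
  | tmul a s =>
    have hs : ∀ σ, φ σ s = s := (hS s).1 s.2
    have htrace : ∀ i (h : orbitSum φ (b i • a • (s : V)) ∈ S),
        (⟨_, h⟩ : S) = Algebra.trace K L (b i * a) • s := fun i _ =>
      Subtype.ext (by simp [smul_smul, orbitSum_smul_of_forall_apply_eq hsemi hs])
    simp only [descentInv, AddMonoidHom.mk'_apply, LinearMap.liftBaseChange_tmul,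
      Submodule.subtype_apply, htrace, TensorProduct.tmul_smul]
    simp_rw [TensorProduct.smul_tmul', ← TensorProduct.sum_tmul, sum_trace_mul_smul hb1 hb0]

end Descent

/-- **Galois descent.**
Let `L/K` be a finite Galois extension with group `G = Gal(L/K)` and let `V`
be an `L`-vector space equipped with a `K`-structure, i.e. a family
`φ_σ : V → V` (`σ ∈ G`) of `σ`-semilinear additive bijections satisfying the
cocycle condition `φ_σ ∘ φ_τ = φ_{στ}`. Let `V^G = S` be the `K`-subspace of
invariants. Then the `L`-linear map `L ⊗[K] V^G → V`, `a ⊗ v ↦ a • v`, is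
bijective. -/
theorem stmt_1 (K L : Type*) [Field K] [Field L] [Algebra K L]
    [FiniteDimensional K L] [IsGalois K L]
    (V : Type*) [AddCommGroup V] [Module K V] [Module L V] [IsScalarTower K L V]
    (φ : (L ≃ₐ[K] L) → V ≃+ V)
    (hsemi : ∀ (σ : L ≃ₐ[K] L) (a : L) (v : V), φ σ (a • v) = σ a • φ σ v)
    (hcoc : ∀ (σ τ : L ≃ₐ[K] L) (v : V), φ σ (φ τ v) = φ (σ * τ) v)
    (S : Submodule K V) (hS : ∀ v : V, v ∈ S ↔ ∀ σ : L ≃ₐ[K] L, φ σ v = v) :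
    Function.Bijective (LinearMap.liftBaseChange L S.subtype) ∧
    ∀ (a : L) (v : ↥S),
      LinearMap.liftBaseChange L S.subtype (a ⊗ₜ[K] v) = a • (v : V) := by
  obtain ⟨b, c, hb1, hb0⟩ := exists_sum_apply_mul_eq_one_and_eq_zero K L
  refine ⟨⟨?_, ?_⟩, fun a v => LinearMap.liftBaseChange_tmul L S.subtype a v⟩
  · exact Function.LeftInverse.injective (descentInv_liftBaseChange hsemi hcoc hS hb1 hb0)
  · exact Function.RightInverse.surjective (liftBaseChange_descentInv hsemi hcoc hS hb1 hb0)
end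

section
/- Let L/K be a quadratic Galois extension of fields with char K ≠ 2 and τ the nontrivial element of Gal(L/K); let W_K be a K-vector space, W_L := L ⊗_K W_K, and θ the τ-semilinear involution of W_L with θ(a ⊗ w) = τ(a) ⊗ w. Let W_+, W_- ⊆ W_L be L-subspaces and φ_+ : W_+ → θ(W_-), φ_- : W_- → θ(W_+) L-linear isomorphisms such that φ_-^τ ∘ φ_+ = id_{W_+} + n for some n with n^e = 0, e ≥ 1. Then the maps φ̃_+ := (1/2)(φ_+ + (φ_-^τ)^{-1}) : W_+ → θ(W_-) and φ̃_- := (1/2)(φ_- + (φ_+^τ)^{-1}) : W_- → θ(W_+) are L-linear isomorphisms, and φ̃_-^τ ∘ φ̃_+ = id_{W_+} + ñ for some ñ with ñ^{⌈e/2⌉} = 0. -/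
open scoped TensorProduct

/-- The `τ`-semilinear involution `θ : L ⊗[K] W_K → L ⊗[K] W_K`,
`a ⊗ w ↦ τ(a) ⊗ w`, induced by a Galois automorphism `τ ∈ Gal(L/K)`. -/
noncomputable def thetaMap (K L : Type*) [Field K] [Field L] [Algebra K L] (τ : L ≃ₐ[K] L)
    (WK : Type*) [AddCommGroup WK] [Module K WK] :
    (L ⊗[K] WK) → (L ⊗[K] WK) :=
  fun x => LinearMap.rTensor WK τ.toLinearMap x

/-- The `τ`-conjugate `φ^τ := θ ∘ φ ∘ θ` of a map `φ : A → B` between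
subspaces, as a map `C → D` (where `θ` maps `C` into `A` and `B` into `D`). -/
def conjFun {L : Type*} [Field L] {WL : Type*} [AddCommGroup WL] [Module L WL]
    (θ : WL → WL) (A B C D : Submodule L WL) (f : ↥A → ↥B)
    (h1 : ∀ x : WL, x ∈ C → θ x ∈ A) (h2 : ∀ x : WL, x ∈ B → θ x ∈ D) :
    ↥C → ↥D :=
  fun x => ⟨θ ((f ⟨θ (x : WL), h1 x x.2⟩ : ↥B) : WL),
    h2 _ (f ⟨θ (x : WL), h1 x x.2⟩).2⟩

/-- One step of unipotent stabilization: it replaces the pair `(φ₊, φ₋)` with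
the pair `(½(φ₊ + (φ₋^τ)⁻¹), ½(φ₋ + (φ₊^τ)⁻¹))`. -/
noncomputable def stabStep {L : Type*} [Field L] {WL : Type*} [AddCommGroup WL]
    [Module L WL] (θ : WL → WL) (Wp Wm Tp Tm : Submodule L WL)
    (h1 : ∀ x : WL, x ∈ Tp → θ x ∈ Wm) (h2 : ∀ x : WL, x ∈ Tm → θ x ∈ Wp)
    (fp : ↥Wp → ↥Tp) (fm : ↥Wm → ↥Tm) : (↥Wp → ↥Tp) × (↥Wm → ↥Tm) :=
  (fun x => (2 : L)⁻¹ • (fp x + Function.invFun (conjFun θ Wm Tm Tp Wp fm h1 h2) x),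
   fun y => (2 : L)⁻¹ • (fm y + Function.invFun (conjFun θ Wp Tp Tm Wm fp h2 h1) y))

/-!
Write `u := 1 + n` and `P := φ₋^τ`, so that `P ∘ φ₊ = u`. Then `P⁻¹ = φ₊ ∘ u⁻¹`, hence
`φ̃₊ = φ₊ ∘ S` with `S = ½(1 + u⁻¹)`. Since `θ` is an involution, `(φ₊^τ)⁻¹ = (φ₊⁻¹)^τ`, so
`φ̃₋^τ = ½(P + φ₊⁻¹) = T ∘ φ₊⁻¹` with `T = ½(u + 1) = 1 + n/2`. Both `S = u⁻¹ T` and `T` are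
units, so `φ̃₊` and `φ̃₋^τ` (hence `φ̃₋ = (φ̃₋^τ)^τ`) are isomorphisms. Finally
`φ̃₋^τ ∘ φ̃₊ = T S = u⁻¹ T² = 1 + ¼ u⁻¹ n²`, and as `u⁻¹` commutes with `n`, the new nilpotent
part vanishes in degree `⌈e/2⌉`.
-/

section Conjugation

variable {L : Type*} [Field L] {WL : Type*} [AddCommGroup WL] [Module L WL] {σ : L →+* L}
  {θ : WL →ₛₗ[σ] WL} {A B C D : Submodule L WL}

theorem apply_apply_smul_of_involutive (hθ : Function.Involutive θ) (a : L) (y : WL) :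
    σ (σ a) • y = a • y := by
  conv_rhs => rw [← hθ (a • y), map_smulₛₗ, map_smulₛₗ, hθ]

variable (θ) in
def conjLin (hθ : Function.Involutive θ) (f : A →ₗ[L] B)
    (h1 : ∀ x ∈ C, θ x ∈ A) (h2 : ∀ x ∈ B, θ x ∈ D) : C →ₗ[L] D where
  toFun := conjFun θ A B C D f h1 h2
  map_add' x y := by
    change θ.restrict h2 (f (θ.restrict h1 (x + y))) = _
    simp only [map_add]
    rfl
  map_smul' a x := by
    change θ.restrict h2 (f (θ.restrict h1 (a • x))) = _
    simp only [map_smulₛₗ, RingHom.id_apply]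
    ext
    exact apply_apply_smul_of_involutive hθ a _

@[simp]
theorem coe_conjLin (hθ : Function.Involutive θ) (f : A →ₗ[L] B)
    (h1 : ∀ x ∈ C, θ x ∈ A) (h2 : ∀ x ∈ B, θ x ∈ D) :
    ⇑(conjLin θ hθ f h1 h2) = conjFun θ A B C D f h1 h2 :=
  rfl

theorem conjFun_conjFun (hθ : Function.Involutive θ) (f : A → B)
    (h1 : ∀ x ∈ C, θ x ∈ A) (h2 : ∀ x ∈ B, θ x ∈ D)
    (h1' : ∀ x ∈ A, θ x ∈ C) (h2' : ∀ x ∈ D, θ x ∈ B) :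
    conjFun θ C D A B (conjFun θ A B C D f h1 h2) h1' h2' = f := by
  funext x
  ext
  simp [conjFun, hθ _]

theorem conjFun_injective (hθ : Function.Involutive θ) {f : A → B} (hf : Function.Injective f)
    (h1 : ∀ x ∈ C, θ x ∈ A) (h2 : ∀ x ∈ B, θ x ∈ D) :
    Function.Injective (conjFun θ A B C D f h1 h2) := by
  intro x y hxy
  have hf' := hf (Subtype.ext (hθ.injective (congrArg Subtype.val hxy)))
  exact Subtype.ext (hθ.injective (congrArg Subtype.val hf'))

theorem conjFun_bijective (hθ : Function.Involutive θ) {f : A → B} (hf : Function.Bijective f)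
    (h1 : ∀ x ∈ C, θ x ∈ A) (h2 : ∀ x ∈ B, θ x ∈ D)
    (h1' : ∀ x ∈ A, θ x ∈ C) (h2' : ∀ x ∈ D, θ x ∈ B) :
    Function.Bijective (conjFun θ A B C D f h1 h2) := by
  refine ⟨conjFun_injective hθ hf.1 h1 h2, fun d => ?_⟩
  obtain ⟨a, ha⟩ := hf.2 ⟨θ d, h2' _ d.2⟩
  refine ⟨⟨θ a, h1' _ a.2⟩, Subtype.ext ?_⟩
  simp [conjFun, hθ _, ha]

theorem invFun_conjFun (hθ : Function.Involutive θ) (f : A ≃ₗ[L] B)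
    (h1 : ∀ x ∈ C, θ x ∈ A) (h2 : ∀ x ∈ B, θ x ∈ D)
    (h1' : ∀ x ∈ A, θ x ∈ C) (h2' : ∀ x ∈ D, θ x ∈ B) :
    Function.invFun (conjFun θ A B C D f h1 h2) = conjFun θ B A D C f.symm h2' h1' := by
  refine Function.invFun_eq_of_injective_of_rightInverse (conjFun_injective hθ f.injective h1 h2)
    fun d => Subtype.ext ?_
  simp [conjFun, hθ _]

end Conjugation

section Unipotent

variable {L A : Type*} [Field L] [Ring A] [Algebra L A] {n : A} {u : Aˣ}

theorem inv_two_smul_add_one (h2 : (2 : L) ≠ 0) (hu : (u : A) = 1 + n) :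
    (2 : L)⁻¹ • ((u : A) + 1) = 1 + (2 : L)⁻¹ • n := by
  rw [hu, add_right_comm, smul_add, smul_add, ← add_smul, ← two_mul, mul_inv_cancel₀ h2,
    one_smul]

theorem inv_two_smul_one_add_inv (u : Aˣ) :
    (2 : L)⁻¹ • (1 + ((u⁻¹ : Aˣ) : A)) = ((u⁻¹ : Aˣ) : A) * ((2 : L)⁻¹ • ((u : A) + 1)) := by
  rw [mul_smul_comm, mul_add, Units.inv_mul, mul_one, add_comm]

theorem one_add_inv_two_smul_mul_inv_mul (h2 : (2 : L) ≠ 0) (hu : (u : A) = 1 + n) :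
    (1 + (2 : L)⁻¹ • n) * (((u⁻¹ : Aˣ) : A) * (1 + (2 : L)⁻¹ • n))
      = 1 + (4 : L)⁻¹ • (((u⁻¹ : Aˣ) : A) * n ^ 2) := by
  have hcomm : Commute (u : A) (1 + (2 : L)⁻¹ • n) := by
    rw [hu]
    exact (Commute.one_left _).add_left
      ((Commute.one_right n).add_right ((Commute.refl n).smul_right _))
  have hsq : (1 + (2 : L)⁻¹ • n) * (1 + (2 : L)⁻¹ • n) = u + (4 : L)⁻¹ • n ^ 2 := by
    rw [add_mul, mul_add, mul_add, one_mul, mul_one, one_mul, smul_mul_smul_comm, add_assoc,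
      ← add_assoc ((2 : L)⁻¹ • n), ← add_smul, ← two_mul, mul_inv_cancel₀ h2, one_smul, hu,
      add_assoc, sq, ← mul_inv]
    norm_num
  rw [← mul_assoc, ← hcomm.units_inv_left.eq, mul_assoc, hsq, mul_add, Units.inv_mul,
    mul_smul_comm]

theorem smul_mul_sq_pow_eq_zero {v : A} (hvn : Commute v n) {e : ℕ} (hne : n ^ e = 0) (c : L) :
    (c • (v * n ^ 2)) ^ ((e + 1) / 2) = 0 := by
  rw [smul_pow, (hvn.pow_right 2).mul_pow, ← pow_mul, pow_eq_zero_of_le (by omega) hne, mul_zero,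
    smul_zero]

end Unipotent

section StabStep

variable {L : Type*} [Field L] {WL : Type*} [AddCommGroup WL] [Module L WL] {σ : L →+* L}
  {θ : WL →ₛₗ[σ] WL} {Wp Wm Tp Tm : Submodule L WL}
  {hTp : ∀ x ∈ Tp, θ x ∈ Wm} {hTm : ∀ x ∈ Tm, θ x ∈ Wp}
  {φp : Wp ≃ₗ[L] Tp} {φm : Wm → Tm} {u : (Module.End L Wp)ˣ}

theorem stabStep_fst_apply
    (hP : ∀ z, conjFun θ Wm Tm Tp Wp φm hTp hTm z = (u : Module.End L Wp) (φp.symm z))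
    (x : Wp) :
    (stabStep θ Wp Wm Tp Tm hTp hTm φp φm).1 x
      = φp (((2 : L)⁻¹ • (1 + ↑u⁻¹) : Module.End L Wp) x) := by
  have hinv : Function.invFun (conjFun θ Wm Tm Tp Wp φm hTp hTm)
      = φp ∘ ⇑(↑u⁻¹ : Module.End L Wp) := by
    refine Function.invFun_eq_of_injective_of_rightInverse (fun a b hab => ?_) fun x => ?_
    · rw [hP, hP] at hab
      simpa [← Module.End.mul_apply] using congrArg (↑u⁻¹ : Module.End L Wp) hab
    · simp [hP, ← Module.End.mul_apply]
  simp [stabStep, hinv]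

theorem conjFun_stabStep_snd_apply (hθ : Function.Involutive θ)
    (hWm : ∀ x ∈ Wm, θ x ∈ Tp) (hWp : ∀ x ∈ Wp, θ x ∈ Tm)
    (hP : ∀ z, conjFun θ Wm Tm Tp Wp φm hTp hTm z = (u : Module.End L Wp) (φp.symm z))
    (z : Tp) :
    conjFun θ Wm Tm Tp Wp (stabStep θ Wp Wm Tp Tm hTp hTm φp φm).2 hTp hTm z
      = ((2 : L)⁻¹ • (↑u + 1) : Module.End L Wp) (φp.symm z) := by
  have := hP z
  ext
  simp only [LinearMap.smul_apply, LinearMap.add_apply, Module.End.one_apply, ← this]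
  simp [stabStep, conjFun, invFun_conjFun hθ φp hTm hTp hWp hWm, hθ _, map_ofNat]

theorem stabStep_spec (hθ : Function.Involutive θ) (h2 : (2 : L) ≠ 0)
    (hWm : ∀ x ∈ Wm, θ x ∈ Tp) (hWp : ∀ x ∈ Wp, θ x ∈ Tm)
    (n : Module.End L Wp) {e : ℕ} (hne : n ^ e = 0)
    (hcomp : ∀ x, conjFun θ Wm Tm Tp Wp φm hTp hTm (φp x) = x + n x) :
    (∃ ψp : Wp ≃ₗ[L] Tp, ∀ x, ψp x = (stabStep θ Wp Wm Tp Tm hTp hTm φp φm).1 x) ∧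
    (∃ ψm : Wm ≃ₗ[L] Tm, ∀ y, ψm y = (stabStep θ Wp Wm Tp Tm hTp hTm φp φm).2 y) ∧
    (∃ ntil : Module.End L Wp, ntil ^ ((e + 1) / 2) = 0 ∧ ∀ x,
      conjFun θ Wm Tm Tp Wp (stabStep θ Wp Wm Tp Tm hTp hTm φp φm).2 hTp hTm
        ((stabStep θ Wp Wm Tp Tm hTp hTm φp φm).1 x) = x + ntil x) := by
  obtain ⟨u, hu⟩ := IsNilpotent.isUnit_one_add ⟨e, hne⟩
  have hP : ∀ z, conjFun θ Wm Tm Tp Wp φm hTp hTm z = (u : Module.End L Wp) (φp.symm z) :=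
    fun z => by simpa [hu] using hcomp (φp.symm z)
  set S : Module.End L Wp := (2 : L)⁻¹ • (1 + ↑u⁻¹)
  set T : Module.End L Wp := (2 : L)⁻¹ • (↑u + 1) with hT_def
  have hT : IsUnit T := by
    rw [hT_def, inv_two_smul_add_one h2 hu]
    exact (IsNilpotent.smul ⟨e, hne⟩ _).isUnit_one_add
  have hS : S = ↑u⁻¹ * T := inv_two_smul_one_add_inv u
  have hTS : T * S = 1 + (4 : L)⁻¹ • (↑u⁻¹ * n ^ 2) := by
    rw [hS, hT_def, inv_two_smul_add_one h2 hu, one_add_inv_two_smul_mul_inv_mul h2 hu]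
  have hS_bij : Function.Bijective S := (Module.End.isUnit_iff S).mp (hS ▸ u⁻¹.isUnit.mul hT)
  let χ : Tp →ₗ[L] Wp := T ∘ₗ φp.symm
  have hχ_bij : Function.Bijective χ :=
    ((Module.End.isUnit_iff T).mp hT).comp φp.symm.bijective
  have hconj : conjFun θ Wm Tm Tp Wp (stabStep θ Wp Wm Tp Tm hTp hTm φp φm).2 hTp hTm = χ :=
    funext (conjFun_stabStep_snd_apply hθ hWm hWp hP)
  have hun : Commute (↑u⁻¹ : Module.End L Wp) n :=
    (hu ▸ (Commute.one_left n).add_left (Commute.refl n) :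
      Commute (u : Module.End L Wp) n).units_inv_left
  refine ⟨⟨.ofBijective (φp ∘ₗ S) (φp.bijective.comp hS_bij), fun x => ?_⟩,
    ⟨.ofBijective (conjLin θ hθ χ hWm hWp) ?_, fun y => ?_⟩,
    _, smul_mul_sq_pow_eq_zero hun hne (4 : L)⁻¹, fun x => ?_⟩
  · rw [stabStep_fst_apply hP]
    rfl
  · rw [coe_conjLin]
    exact conjFun_bijective hθ hχ_bij hWm hWp hTp hTm
  · rw [LinearEquiv.ofBijective_apply, coe_conjLin, ← hconj, conjFun_conjFun hθ]
  · rw [hconj, stabStep_fst_apply hP]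
    change T (φp.symm (φp (S x))) = _
    rw [LinearEquiv.symm_apply_apply, ← Module.End.mul_apply, hTS]
    rfl

end StabStep

theorem AlgEquiv.involutive_of_finrank_eq_two {K L : Type*} [Field K] [Field L] [Algebra K L]
    [IsGalois K L] (h : Module.finrank K L = 2) (τ : L ≃ₐ[K] L) : Function.Involutive τ := by
  have : FiniteDimensional K L := Module.finite_of_finrank_eq_succ h
  have hτ : τ ^ 2 = 1 := by
    rw [← h, ← IsGalois.card_aut_eq_finrank]
    exact pow_card_eq_one'
  exact fun a => by simpa [sq] using DFunLike.congr_fun hτ a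

section Theta

variable (K L : Type*) [Field K] [Field L] [Algebra K L] (τ : L ≃ₐ[K] L)
  (WK : Type*) [AddCommGroup WK] [Module K WK]

noncomputable def thetaSemilinear : L ⊗[K] WK →ₛₗ[(τ : L →+* L)] L ⊗[K] WK where
  toFun := thetaMap K L τ WK
  map_add' := map_add (LinearMap.rTensor WK τ.toLinearMap)
  map_smul' a x := by
    induction x using TensorProduct.induction_on with
    | zero => simp [thetaMap]
    | tmul b w => simp [thetaMap, TensorProduct.smul_tmul']
    | add x y hx hy => simp_all [thetaMap]

variable {K L τ} in
theorem thetaMap_involutive (hτ : Function.Involutive τ) :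
    Function.Involutive (thetaMap K L τ WK) := by
  have hττ : τ.toLinearMap ∘ₗ τ.toLinearMap = LinearMap.id := LinearMap.ext hτ
  intro x
  unfold thetaMap
  rw [← LinearMap.rTensor_comp_apply, hττ, LinearMap.rTensor_id_apply]

end Theta

theorem stmt_4_general (K L : Type*) [Field K] [Field L] [Algebra K L] [IsGalois K L]
    (hdeg : Module.finrank K L = 2) (hchar : (2 : K) ≠ 0)
    (τ : L ≃ₐ[K] L)
    (WK : Type*) [AddCommGroup WK] [Module K WK]
    (Wp Wm Tp Tm : Submodule L (L ⊗[K] WK))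
    (hTp : ∀ x : L ⊗[K] WK, x ∈ Tp ↔ thetaMap K L τ WK x ∈ Wm)
    (hTm : ∀ x : L ⊗[K] WK, x ∈ Tm ↔ thetaMap K L τ WK x ∈ Wp)
    (φp : ↥Wp →ₗ[L] ↥Tp) (φm : ↥Wm →ₗ[L] ↥Tm)
    (hφp : Function.Bijective φp)
    (n : ↥Wp →ₗ[L] ↥Wp) (e : ℕ) (hne : n ^ e = 0)
    (hcomp : ∀ x : ↥Wp,
      conjFun (thetaMap K L τ WK) Wm Tm Tp Wp (⇑φm)
        (fun x hx => (hTp x).mp hx) (fun x hx => (hTm x).mp hx) (φp x)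
      = x + n x) :
    (∃ ψp : ↥Wp ≃ₗ[L] ↥Tp, ∀ x : ↥Wp,
      ψp x = (stabStep (thetaMap K L τ WK) Wp Wm Tp Tm
        (fun x hx => (hTp x).mp hx) (fun x hx => (hTm x).mp hx) (⇑φp) (⇑φm)).1 x) ∧
    (∃ ψm : ↥Wm ≃ₗ[L] ↥Tm, ∀ y : ↥Wm,
      ψm y = (stabStep (thetaMap K L τ WK) Wp Wm Tp Tm
        (fun x hx => (hTp x).mp hx) (fun x hx => (hTm x).mp hx) (⇑φp) (⇑φm)).2 y) ∧
    (∃ ntil : ↥Wp →ₗ[L] ↥Wp, ntil ^ ((e + 1) / 2) = 0 ∧ ∀ x : ↥Wp,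
      conjFun (thetaMap K L τ WK) Wm Tm Tp Wp
        ((stabStep (thetaMap K L τ WK) Wp Wm Tp Tm
          (fun x hx => (hTp x).mp hx) (fun x hx => (hTm x).mp hx) (⇑φp) (⇑φm)).2)
        (fun x hx => (hTp x).mp hx) (fun x hx => (hTm x).mp hx)
        ((stabStep (thetaMap K L τ WK) Wp Wm Tp Tm
          (fun x hx => (hTp x).mp hx) (fun x hx => (hTm x).mp hx) (⇑φp) (⇑φm)).1 x)
      = x + ntil x) := by
  have hθ := thetaMap_involutive WK (AlgEquiv.involutive_of_finrank_eq_two hdeg τ)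
  have h2 : (2 : L) ≠ 0 := by
    rw [← map_ofNat (algebraMap K L) 2]
    exact (map_ne_zero _).mpr hchar
  have hWm : ∀ x ∈ Wm, thetaMap K L τ WK x ∈ Tp := fun x hx => (hTp _).mpr (by rwa [hθ x])
  have hWp : ∀ x ∈ Wp, thetaMap K L τ WK x ∈ Tm := fun x hx => (hTm _).mpr (by rwa [hθ x])
  exact stabStep_spec (θ := thetaSemilinear K L τ WK) (φp := .ofBijective φp hφp) hθ h2 hWm hWp
    n hne hcomp

/-- **Unipotent stabilization, one step.**
Let `L/K` be a quadratic Galois extension with `char K ≠ 2`, `τ` the nontrivial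
Galois automorphism, `W_K` a `K`-space, `W_L = L ⊗[K] W_K` with the induced
semilinear involution `θ`. Let `W₊, W₋ ⊆ W_L` be `L`-subspaces with
`T₊ = θ(W₋)`, `T₋ = θ(W₊)`, and let `φ₊ : W₊ → θ(W₋)`, `φ₋ : W₋ → θ(W₊)` be
`L`-linear isomorphisms with `φ₋^τ ∘ φ₊ = id + n`, `n^e = 0`, `e ≥ 1`. Then the
maps `φ̃₊ := ½(φ₊ + (φ₋^τ)⁻¹)` and `φ̃₋ := ½(φ₋ + (φ₊^τ)⁻¹)` are `L`-linear
isomorphisms and `φ̃₋^τ ∘ φ̃₊ = id + ntil` with `ntil^⌈e/2⌉ = 0`. -/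
theorem stmt_4 (K L : Type*) [Field K] [Field L] [Algebra K L] [IsGalois K L]
    (hdeg : Module.finrank K L = 2) (hchar : (2 : K) ≠ 0)
    (τ : L ≃ₐ[K] L) (hτ : τ ≠ 1)
    (WK : Type*) [AddCommGroup WK] [Module K WK]
    (Wp Wm Tp Tm : Submodule L (L ⊗[K] WK))
    (hTp : ∀ x : L ⊗[K] WK, x ∈ Tp ↔ thetaMap K L τ WK x ∈ Wm)
    (hTm : ∀ x : L ⊗[K] WK, x ∈ Tm ↔ thetaMap K L τ WK x ∈ Wp)
    (φp : ↥Wp →ₗ[L] ↥Tp) (φm : ↥Wm →ₗ[L] ↥Tm)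
    (hφp : Function.Bijective φp) (hφm : Function.Bijective φm)
    (n : ↥Wp →ₗ[L] ↥Wp) (e : ℕ) (he : 1 ≤ e) (hne : n ^ e = 0)
    (hcomp : ∀ x : ↥Wp,
      conjFun (thetaMap K L τ WK) Wm Tm Tp Wp (⇑φm)
        (fun x hx => (hTp x).mp hx) (fun x hx => (hTm x).mp hx) (φp x)
      = x + n x) :
    (∃ ψp : ↥Wp ≃ₗ[L] ↥Tp, ∀ x : ↥Wp,
      ψp x = (stabStep (thetaMap K L τ WK) Wp Wm Tp Tm
        (fun x hx => (hTp x).mp hx) (fun x hx => (hTm x).mp hx) (⇑φp) (⇑φm)).1 x) ∧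
    (∃ ψm : ↥Wm ≃ₗ[L] ↥Tm, ∀ y : ↥Wm,
      ψm y = (stabStep (thetaMap K L τ WK) Wp Wm Tp Tm
        (fun x hx => (hTp x).mp hx) (fun x hx => (hTm x).mp hx) (⇑φp) (⇑φm)).2 y) ∧
    (∃ ntil : ↥Wp →ₗ[L] ↥Wp, ntil ^ ((e + 1) / 2) = 0 ∧ ∀ x : ↥Wp,
      conjFun (thetaMap K L τ WK) Wm Tm Tp Wp
        ((stabStep (thetaMap K L τ WK) Wp Wm Tp Tm
          (fun x hx => (hTp x).mp hx) (fun x hx => (hTm x).mp hx) (⇑φp) (⇑φm)).2)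
        (fun x hx => (hTp x).mp hx) (fun x hx => (hTm x).mp hx)
        ((stabStep (thetaMap K L τ WK) Wp Wm Tp Tm
          (fun x hx => (hTp x).mp hx) (fun x hx => (hTm x).mp hx) (⇑φp) (⇑φm)).1 x)
      = x + ntil x) :=
  stmt_4_general K L hdeg hchar τ WK Wp Wm Tp Tm hTp hTm φp φm hφp n e hne hcomp
end

section
/- Let E be a field of characteristic 0, A an associative unital E-algebra containing elements H, X, Y with HX − XH = 2X, HY − YH = −2Y, XY − YX = H, and C := H² − 2H + 4XY + 1. Let M be a left A-module, and for n ∈ ℤ let M_n := {v ∈ M : H·v = n·v}. Then for every integer k and every m ≥ 0: (1) for all v ∈ M_{k+1}, 4^m · X^m · (Y^m · v) = (∏_{j=0}^{m−1} (C − (k−2j)²)) · v; and (2) for all v ∈ M_{−(k+1)}, 4^m · Y^m · (X^m · v) = (∏_{j=0}^{m−1} (C − (k−2j)²)) · v. -/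
/-!
Since `4XY = C - (H - 1)²` and `Y` lowers `H`-weights by `2`, induction on `m` gives (1):
for `v` of weight `k + 1`, the vector `Y v` has weight `(k - 2) + 1`, the factors `C - j²`
commute with `X`, and `4XY v = (C - k²) v`. The substitution `(H, X, Y) ↦ (-H, Y, X)`
preserves the `sl₂` relations and the Casimir element, and turns (1) into (2).
-/

section Casimir

variable {A : Type*} [Ring A]

-- As in the theorem, `(j : ℤ)` makes `List.range m` a `List ℤ` through a monadic coercion.
def casimirProd (C : A) (k : ℤ) (m : ℕ) : A :=
  ((List.range m).map (fun j => C - (((k - 2 * (j : ℤ)) ^ 2 : ℤ) : A))).prod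

theorem casimirProd_eq_prod_map_range (C : A) (k : ℤ) (m : ℕ) :
    casimirProd C k m =
      ((List.range m).map fun j : ℕ => C - (((k - 2 * j) ^ 2 : ℤ) : A)).prod := by
  rw [casimirProd, show ((List.range m : List ℕ) : List ℤ) = (List.range m).map (↑) from
    List.flatMap_pure_eq_map _ _, List.map_map]
  rfl

theorem casimirProd_succ (C : A) (k : ℤ) (m : ℕ) :
    casimirProd C k (m + 1) = (C - ((k ^ 2 : ℤ) : A)) * casimirProd C (k - 2) m := by
  simp only [casimirProd_eq_prod_map_range, List.range_succ_eq_map, List.map_cons,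
    List.map_map, List.prod_cons]
  congr 3
  · simp
  · ext j
    simp only [Function.comp_apply, Nat.cast_succ]
    ring_nf

theorem Commute.casimirProd_left {C a : A} (h : Commute C a) (k : ℤ) (m : ℕ) :
    Commute (casimirProd C k m) a := by
  refine Commute.list_prod_left _ _ fun x hx => ?_
  obtain ⟨j, -, rfl⟩ := List.mem_map.1 hx
  exact h.sub_left (Int.cast_commute _ _)

def casimir (H X Y : A) : A := H ^ 2 - 2 * H + 4 * (X * Y) + 1

theorem four_mul_mul_eq_casimir_sub (H X Y : A) :
    4 * (X * Y) = casimir H X Y - (H - 1) ^ 2 := by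
  rw [casimir]; noncomm_ring

section Sl2

variable {H X Y : A}

theorem commute_casimir_raising (hHX : H * X - X * H = 2 * X) (hXY : X * Y - Y * X = H) :
    Commute (casimir H X Y) X := by
  have key : casimir H X Y * X - X * casimir H X Y
      = (H * X - X * H - 2 * X) * H + H * (H * X - X * H - 2 * X)
        - 4 * (X * (X * Y - Y * X - H)) := by
    rw [casimir]; noncomm_ring
  rw [hHX, hXY, sub_self, sub_self] at key
  simp only [zero_mul, mul_zero, add_zero, sub_zero, sub_eq_zero] at key
  exact key

theorem casimir_neg_swap (hXY : X * Y - Y * X = H) : casimir (-H) Y X = casimir H X Y := by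
  rw [casimir, casimir, ← hXY]; noncomm_ring

variable {M : Type*} [AddCommGroup M] [Module A M] {v : M} {n : ℤ}

theorem smul_lowering_of_weight (hHY : H * Y - Y * H = -2 * Y) (hv : H • v = n • v) :
    H • Y • v = (n - 2) • Y • v := by
  have hHY' : H * Y = Y * H - 2 * Y := by
    rw [← sub_add_cancel (H * Y) (Y * H), hHY]; noncomm_ring
  rw [smul_smul, hHY', sub_smul, mul_smul, hv, smul_comm, mul_smul, two_smul, sub_smul,
    two_smul]

theorem sub_one_sq_smul_of_weight (hv : H • v = n • v) :
    (H - 1) ^ 2 • v = (n - 1) ^ 2 • v := by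
  have h : (H - 1) • v = (n - 1) • v := by rw [sub_smul, sub_smul, hv, one_smul, one_smul]
  rw [pow_two, mul_smul, h, smul_comm, h, smul_smul, pow_two]

theorem four_mul_mul_smul_of_weight (hv : H • v = n • v) :
    (4 * X * Y) • v = (casimir H X Y - (((n - 1) ^ 2 : ℤ) : A)) • v := by
  rw [mul_assoc, four_mul_mul_eq_casimir_sub H, sub_smul, sub_smul,
    sub_one_sq_smul_of_weight hv, Int.cast_smul_eq_zsmul]

theorem four_pow_smul_pow_smul_pow_smul_of_weight (hHX : H * X - X * H = 2 * X)
    (hHY : H * Y - Y * H = -2 * Y) (hXY : X * Y - Y * X = H) (m : ℕ) (k : ℤ)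
    (hv : H • v = (k + 1) • v) :
    (4 : A) ^ m • X ^ m • Y ^ m • v = casimirProd (casimir H X Y) k m • v := by
  induction m generalizing k v with
  | zero => simp [casimirProd]
  | succ m ih =>
    have hYv : H • Y • v = (k - 2 + 1) • Y • v := by
      rw [smul_lowering_of_weight hHY hv]; ring_nf
    have hXYv : (4 * X * Y) • v = (casimir H X Y - ((k ^ 2 : ℤ) : A)) • v := by
      rw [four_mul_mul_smul_of_weight hv, add_sub_cancel_right]
    set P := casimirProd (casimir H X Y) (k - 2) m
    have h4X : Commute (4 : A) X := Commute.ofNat_left 4 X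
    have hP4X : Commute P (4 * X) :=
      (Commute.ofNat_right P 4).mul_right ((commute_casimir_raising hHX hXY).casimirProd_left _ _)
    have hPC : Commute P (casimir H X Y - ((k ^ 2 : ℤ) : A)) :=
      ((Commute.refl _).sub_right (Int.cast_commute _ _).symm).casimirProd_left _ _
    have ih := ih (k - 2) hYv
    rw [← mul_smul, ← h4X.mul_pow] at ih ⊢
    calc (4 * X) ^ (m + 1) • Y ^ (m + 1) • v
        = (4 * X) • (4 * X) ^ m • Y ^ m • Y • v := by
          rw [pow_succ', pow_succ, mul_smul (4 * X), mul_smul (Y ^ m)]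
      _ = P • (4 * X * Y) • v := by
          rw [ih, smul_smul, ← hP4X.eq, mul_smul, ← mul_smul (4 * X) Y]
      _ = casimirProd (casimir H X Y) k (m + 1) • v := by
          rw [hXYv, smul_smul, hPC.eq, casimirProd_succ]

end Sl2

end Casimir

theorem stmt_12_general (A : Type*) [Ring A] (H X Y : A)
    (hHX : H * X - X * H = 2 * X) (hHY : H * Y - Y * H = -2 * Y)
    (hXY : X * Y - Y * X = H)
    (C : A) (hC : C = H ^ 2 - 2 * H + 4 * (X * Y) + 1)
    (M : Type*) [AddCommGroup M] [Module A M]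
    (k : ℤ) (m : ℕ) :
    (∀ v : M, H • v = (k + 1) • v →
      (4 : A) ^ m • X ^ m • Y ^ m • v
        = (((List.range m).map
            (fun j => C - (((k - 2 * (j : ℤ)) ^ 2 : ℤ) : A))).prod) • v) ∧
    (∀ v : M, H • v = (-(k + 1)) • v →
      (4 : A) ^ m • Y ^ m • X ^ m • v
        = (((List.range m).map
            (fun j => C - (((k - 2 * (j : ℤ)) ^ 2 : ℤ) : A))).prod) • v) := by
  obtain rfl : C = casimir H X Y := hC
  refine ⟨fun v hv => four_pow_smul_pow_smul_pow_smul_of_weight hHX hHY hXY m k hv,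
    fun v hv => ?_⟩
  have hYX : Y * X - X * Y = -H := by rw [← hXY, neg_sub]
  rw [← casimir_neg_swap hXY]
  refine four_pow_smul_pow_smul_pow_smul_of_weight (H := -H) ?_ ?_ hYX m k ?_
  · rw [neg_mul, mul_neg, sub_neg_eq_add, neg_add_eq_sub, ← neg_sub, hHY]; noncomm_ring
  · rw [neg_mul, mul_neg, sub_neg_eq_add, neg_add_eq_sub, ← neg_sub, hHX]; noncomm_ring
  · rw [neg_smul, hv, neg_smul, neg_neg]

/-- **The basic `sl₂` product identities.**
Let `E` be a field of characteristic `0`, `A` an associative unital `E`-algebra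
containing elements `H`, `X`, `Y` with `HX − XH = 2X`, `HY − YH = −2Y`,
`XY − YX = H`, and `C := H² − 2H + 4XY + 1`. Let `M` be a left `A`-module and
for `n ∈ ℤ` let `M_n := {v : H•v = n•v}`. Then for every `k ∈ ℤ` and `m ≥ 0`:
(1) for `v ∈ M_{k+1}` one has `4^m·Xᵐ·(Yᵐ·v) = (∏_{j=0}^{m−1}(C−(k−2j)²))·v`;
(2) for `v ∈ M_{−(k+1)}` one has `4^m·Yᵐ·(Xᵐ·v) = (∏_{j=0}^{m−1}(C−(k−2j)²))·v`.
(The product of the pairwise commuting factors `C − (k−2j)²` is taken in the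
natural order.) -/
theorem stmt_12 (E : Type*) [Field E] [CharZero E]
    (A : Type*) [Ring A] [Algebra E A] (H X Y : A)
    (hHX : H * X - X * H = 2 * X) (hHY : H * Y - Y * H = -2 * Y)
    (hXY : X * Y - Y * X = H)
    (C : A) (hC : C = H ^ 2 - 2 * H + 4 * (X * Y) + 1)
    (M : Type*) [AddCommGroup M] [Module A M]
    (k : ℤ) (m : ℕ) :
    (∀ v : M, H • v = (k + 1) • v →
      (4 : A) ^ m • X ^ m • Y ^ m • v
        = (((List.range m).map
            (fun j => C - (((k - 2 * (j : ℤ)) ^ 2 : ℤ) : A))).prod) • v) ∧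
    (∀ v : M, H • v = (-(k + 1)) • v →
      (4 : A) ^ m • Y ^ m • X ^ m • v
        = (((List.range m).map
            (fun j => C - (((k - 2 * (j : ℤ)) ^ 2 : ℤ) : A))).prod) • v) :=
  stmt_12_general A H X Y hHX hHY hXY C hC M k m
end

section
/- Let E be a field of characteristic 0, A an associative unital E-algebra containing elements H, X, Y with HX − XH = 2X, HY − YH = −2Y, XY − YX = H, and C := H² − 2H + 4XY + 1. Let M be a left A-module, ℓ ≥ 0 an integer, and suppose there is N ≥ 1 such that (C − ℓ²)^N · v = 0 for all v ∈ M. Then for every integer k and every m ≥ 0: the map v ↦ 4^m · X^m · (Y^m · v) sends M_{k+1} into M_{k+1} and, as an endomorphism of M_{k+1}, equals ∏_{j=0}^{m−1} (ℓ² − (k−2j)²) · id plus a nilpotent endomorphism; similarly, v ↦ 4^m · Y^m · (X^m · v) sends M_{−(k+1)} into M_{−(k+1)} and equals the same scalar ∏_{j=0}^{m−1} (ℓ² − (k−2j)²) · id plus a nilpotent endomorphism. -/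
/-- The `H`-weight space `M_n = {v ∈ M : H • v = n • v}` of an `A`-module `M`,
as an `E`-submodule (for `A` an `E`-algebra). -/
def weightSpace {E : Type*} [Field E] {A : Type*} [Ring A] [Algebra E A]
    {M : Type*} [AddCommGroup M] [Module E M] [Module A M] [IsScalarTower E A M]
    (H : A) (n : ℤ) : Submodule E M where
  carrier := {v | H • v = n • v}
  add_mem' := by
    intro a b ha hb
    simp only [Set.mem_setOf_eq] at ha hb ⊢
    rw [smul_add, smul_add, ha, hb]
  zero_mem' := by simp
  smul_mem' := by
    intro e v hv
    simp only [Set.mem_setOf_eq] at hv ⊢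
    have h1 : H • (e • v) = e • (H • v) := by
      rw [← algebraMap_smul A e v, ← mul_smul, ← Algebra.commutes, mul_smul,
        algebraMap_smul]
    rw [h1, hv]
    exact smul_comm e n v

/-- Let `E` be a field of characteristic `0`, `A` an associative unital
`E`-algebra with elements `H, X, Y` satisfying the `sl₂` relations and Casimir
element `C = H² − 2H + 4XY + 1`, and let `M` be a left `A`-module with
generalized infinitesimal character `ℓ²` (i.e. `(C − ℓ²)^N` annihilates `M` for
some `N ≥ 1`, `ℓ ≥ 0` an integer). Then for every `k ∈ ℤ` and `m ≥ 0` the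
operator `v ↦ 4^m·Xᵐ·Yᵐ·v` sends `M_{k+1}` into itself and, as an endomorphism
of `M_{k+1}`, equals `∏_{j=0}^{m−1}(ℓ² − (k−2j)²) · id` plus a nilpotent
endomorphism; similarly `v ↦ 4^m·Yᵐ·Xᵐ·v` on `M_{−(k+1)}` equals the same
scalar times the identity plus a nilpotent endomorphism. -/
theorem stmt_13 (E : Type*) [Field E] [CharZero E]
    (A : Type*) [Ring A] [Algebra E A] (H X Y : A)
    (hHX : H * X - X * H = 2 * X) (hHY : H * Y - Y * H = -2 * Y)
    (hXY : X * Y - Y * X = H)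
    (C : A) (hC : C = H ^ 2 - 2 * H + 4 * (X * Y) + 1)
    (M : Type*) [AddCommGroup M] [Module E M] [Module A M] [IsScalarTower E A M]
    (ℓ : ℕ) (N : ℕ) (hN : 1 ≤ N)
    (hchar : ∀ v : M, ((C - ((ℓ : A)) ^ 2) ^ N) • v = 0)
    (k : ℤ) (m : ℕ) :
    (∃ u : ↥(weightSpace H (k + 1) : Submodule E M) →ₗ[E]
          ↥(weightSpace H (k + 1) : Submodule E M),
      IsNilpotent u ∧
      ∀ v : ↥(weightSpace H (k + 1) : Submodule E M),
        (4 : A) ^ m • X ^ m • Y ^ m • (v : M)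
          = (∏ j ∈ Finset.range m, ((ℓ : ℤ) ^ 2 - (k - 2 * (j : ℤ)) ^ 2)) • (v : M)
            + ((u v : M))) ∧
    (∃ u' : ↥(weightSpace H (-(k + 1)) : Submodule E M) →ₗ[E]
          ↥(weightSpace H (-(k + 1)) : Submodule E M),
      IsNilpotent u' ∧
      ∀ v : ↥(weightSpace H (-(k + 1)) : Submodule E M),
        (4 : A) ^ m • Y ^ m • X ^ m • (v : M)
          = (∏ j ∈ Finset.range m, ((ℓ : ℤ) ^ 2 - (k - 2 * (j : ℤ)) ^ 2)) • (v : M)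
            + ((u' v : M))) := by
  -- helpers
  have hsmulE : ∀ (a : A) (e : E) (w : M), a • (e • w) = e • (a • w) := by
    intro a e w
    rw [← algebraMap_smul A e w, ← mul_smul, ← Algebra.commutes, mul_smul, algebraMap_smul]
  have hsmulZ : ∀ (a : A) (z : ℤ) (w : M), a • (z • w) = z • (a • w) := by
    intro a z w
    rw [← Int.cast_smul_eq_zsmul A z w, ← mul_smul, ← (Int.cast_commute z a).eq, mul_smul,
      Int.cast_smul_eq_zsmul]
  have h4 : ∀ a : A, Commute (4:A) a := fun a => by
    have := Nat.cast_commute (4:ℕ) a; simpa using this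
  have hCX : Commute C X := by
    show C * X = X * C
    subst hC
    linear_combination (norm := noncomm_ring) H*hHX + hHX*H - 4*(X*hXY)
  have hCY : Commute C Y := by
    show C * Y = Y * C
    subst hC
    linear_combination (norm := noncomm_ring) H*hHY + hHY*H + 4*(hXY*Y)
  have hCH : Commute C H := by
    show C * H = H * C
    subst hC
    linear_combination (norm := noncomm_ring) -4*(X*hHY) - 4*(hHX*Y)
  have hHn : Commute H (C - (ℓ:A)^2) :=
    hCH.symm.sub_right ((Nat.cast_commute ℓ H).symm.pow_right 2)
  -- power commutation
  have hBWpow : ∀ (W' B : A) (d : ℤ), B*W' = W'*(B + (d:A)) → ∀ j : ℕ,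
      B * W'^j = W'^j * (B + (((j:ℤ)*d :ℤ):A)) := by
    intro W' B d h j
    induction j with
    | zero => simp
    | succ j ih =>
      have hcast : (((((j:ℕ)+1:ℕ):ℤ)*d :ℤ):A) = (((j:ℤ)*d:ℤ):A) + (d:A) := by
        push_cast; noncomm_ring
      calc B * W'^(j+1) = (B * W'^j) * W' := by rw [pow_succ, mul_assoc]
        _ = W'^j * ((B + (((j:ℤ)*d:ℤ):A)) * W') := by rw [ih, mul_assoc]
        _ = W'^j * (B*W' + (((j:ℤ)*d:ℤ):A) * W') := by rw [add_mul]
        _ = W'^j * (W'*(B + (d:A)) + W' * (((j:ℤ)*d:ℤ):A)) := by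
            rw [h, (Int.cast_commute ((j:ℤ)*d) W').eq]
        _ = W'^(j+1) * (B + (((((j:ℕ)+1:ℕ):ℤ)*d :ℤ):A)) := by
            rw [hcast, pow_succ]; noncomm_ring
  -- key induction lemma, merged with nilpotent decomposition
  have key : ∀ (V W B : A) (b d : ℤ), (4:A)*(V*W) = C - B^2 → Commute C W → Commute C B →
      (B*W = W*(B + (d:A))) → ∀ (j : ℕ), ∃ q : A,
      Commute (C - (ℓ:A)^2) q ∧ Commute H q ∧
      ∀ v : M, B • v = ((b:ℤ):A) • v →
      (4:A)^j • V^j • W^j • v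
        = (((∏ i ∈ Finset.range j, ((ℓ:ℤ)^2 - (b + (i:ℤ)*d)^2)) :ℤ):A) • v
          + ((C - (ℓ:A)^2) * q) • v := by
    intro V W B b d hVW hCW hCB hBW j
    induction j with
    | zero =>
      refine ⟨0, Commute.zero_right _, Commute.zero_right _, ?_⟩
      intro v hv
      simp
    | succ j ih =>
      obtain ⟨q, hnq, hHq, hq⟩ := ih
      set S : ℤ := ∏ i ∈ Finset.range j, ((ℓ:ℤ)^2 - (b + (i:ℤ)*d)^2) with hS
      set a : ℤ := (ℓ:ℤ)^2 - (b + (j:ℤ)*d)^2 with ha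
      refine ⟨(S:A) + q * ((a:A) + (C - (ℓ:A)^2)), ?_, ?_, ?_⟩
      · exact ((Int.cast_commute _ _).symm).add_right
          (hnq.mul_right (((Int.cast_commute _ _).symm).add_right (Commute.refl _)))
      · exact ((Int.cast_commute _ _).symm).add_right
          (hHq.mul_right (((Int.cast_commute _ _).symm).add_right hHn))
      intro v hv
      set c : A := (((j:ℤ)*d :ℤ):A) with hc
      set t : A := (((b + (j:ℤ)*d) :ℤ):A) with ht
      have hel : (4:A)^(j+1) * V^(j+1) * W^(j+1)
          = ((4:A)^j * V^j * W^j) * (C - (B + c)^2) := by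
        have h := (h4 (V^j)).eq
        have e2 : (C - B^2) * W^j = W^j * (C - (B + c)^2) := by
          have h1 : C * W^j = W^j * C := (hCW.pow_right j).eq
          have hb := hBWpow W B d hBW j
          rw [← hc] at hb
          have h2 : B^2 * W^j = W^j * (B + c)^2 := by
            calc B^2 * W^j = B * (B * W^j) := by rw [sq, mul_assoc]
              _ = B * (W^j * (B + c)) := by rw [hb]
              _ = (B * W^j) * (B + c) := by rw [mul_assoc]
              _ = (W^j * (B + c)) * (B + c) := by rw [hb]
              _ = W^j * ((B + c) * (B + c)) := by rw [mul_assoc]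
              _ = W^j * (B + c)^2 := by rw [sq]
          rw [sub_mul, mul_sub, h1, h2]
        calc (4:A)^(j+1) * V^(j+1) * W^(j+1)
            = (4:A)^j * ((4:A) * V^j) * (V * (W * W^j)) := by
              rw [pow_succ (4:A), pow_succ V, pow_succ' W]; noncomm_ring
          _ = (4:A)^j * (V^j * (4:A)) * (V * (W * W^j)) := by rw [h]
          _ = (4:A)^j * V^j * (((4:A)*(V*W)) * W^j) := by noncomm_ring
          _ = (4:A)^j * V^j * ((C - B^2) * W^j) := by rw [hVW]
          _ = (4:A)^j * V^j * (W^j * (C - (B + c)^2)) := by rw [e2]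
          _ = ((4:A)^j * V^j * W^j) * (C - (B + c)^2) := by noncomm_ring
      have hBcv : (B + c) • v = t • v := by
        have htc : t = ((b:ℤ):A) + c := by rw [ht, hc]; push_cast; noncomm_ring
        rw [add_smul, hv, htc, add_smul]
      have hfv : (C - (B + c)^2) • v = (C - t^2) • v := by
        have hct : Commute t (B+c) := by rw [ht]; exact Int.cast_commute _ _
        have hBc2 : ((B + c)^2) • v = (t^2) • v := by
          calc (B+c)^2 • v = (B+c) • ((B+c) • v) := by rw [sq, mul_smul]
            _ = ((B+c) * t) • v := by rw [hBcv, ← mul_smul]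
            _ = (t * (B+c)) • v := by rw [← hct.eq]
            _ = t • (t • v) := by rw [mul_smul, hBcv]
            _ = t^2 • v := by rw [sq, mul_smul]
        rw [sub_smul, sub_smul, hBc2]
      have hv' : B • ((C - t^2) • v) = ((b:ℤ):A) • ((C - t^2) • v) := by
        have hcomm : Commute B (C - t^2) := by
          refine hCB.symm.sub_right ?_
          rw [ht]; exact (Int.cast_commute _ B).symm.pow_right 2
        calc B • ((C - t^2) • v) = (B * (C - t^2)) • v := by rw [mul_smul]
          _ = ((C - t^2) * B) • v := by rw [hcomm.eq]
          _ = (C - t^2) • (B • v) := by rw [mul_smul]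
          _ = (C - t^2) • (((b:ℤ):A) • v) := by rw [hv]
          _ = ((C - t^2) * ((b:ℤ):A)) • v := by rw [mul_smul]
          _ = (((b:ℤ):A) * (C - t^2)) • v := by rw [(Int.cast_commute b (C - t^2)).eq]
          _ = ((b:ℤ):A) • ((C - t^2) • v) := by rw [mul_smul]
      have hfac : C - t^2 = (a:A) + (C - (ℓ:A)^2) := by
        rw [ht, ha]; push_cast; noncomm_ring
      have helem : ((S:A) + (C - (ℓ:A)^2) * q) * (C - t^2)
          = (((S * a :ℤ)):A)
            + (C - (ℓ:A)^2) * ((S:A) + q * ((a:A) + (C - (ℓ:A)^2))) := by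
        have hsn : (S:A) * (C - (ℓ:A)^2) = (C - (ℓ:A)^2) * (S:A) :=
          (Int.cast_commute _ _).eq
        rw [hfac, Int.cast_mul]
        linear_combination (norm := noncomm_ring) hsn
      have hprod : ((∏ i ∈ Finset.range (j+1), ((ℓ:ℤ)^2 - (b + (i:ℤ)*d)^2)) : ℤ)
          = S * a := by rw [Finset.prod_range_succ, hS, ha]
      calc (4:A)^(j+1) • V^(j+1) • W^(j+1) • v
          = ((4:A)^(j+1) * V^(j+1) * W^(j+1)) • v := by rw [mul_smul, mul_smul]
        _ = ((4:A)^j * V^j * W^j) • ((C - (B + c)^2) • v) := by rw [hel, mul_smul]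
        _ = ((4:A)^j * V^j * W^j) • ((C - t^2) • v) := by rw [hfv]
        _ = (4:A)^j • V^j • W^j • ((C - t^2) • v) := by rw [mul_smul, mul_smul]
        _ = (S:A) • ((C - t^2) • v) + ((C - (ℓ:A)^2) * q) • ((C - t^2) • v) :=
            hq ((C - t^2) • v) hv'
        _ = (((S:A) + (C - (ℓ:A)^2) * q) * (C - t^2)) • v := by
            simp only [add_mul, add_smul, ← mul_smul]
        _ = (((S * a :ℤ)):A) • v
            + ((C - (ℓ:A)^2) * ((S:A) + q * ((a:A) + (C - (ℓ:A)^2)))) • v := by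
            rw [helem, add_smul]
        _ = _ := by rw [hprod]
  have main : ∀ (n₀ b d : ℤ) (V W B : A),
      (4:A)*(V*W) = C - B^2 → Commute C W → Commute C B →
      (B*W = W*(B + (d:A))) →
      (∀ w : M, H • w = n₀ • w → B • w = ((b:ℤ):A) • w) →
      (∀ j : ℕ, (ℓ:ℤ)^2 - (b + (j:ℤ)*d)^2 = (ℓ:ℤ)^2 - (k - 2*(j:ℤ))^2) →
      ∃ u : ↥(weightSpace H n₀ : Submodule E M) →ₗ[E] ↥(weightSpace H n₀ : Submodule E M),
        IsNilpotent u ∧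
        ∀ v : ↥(weightSpace H n₀ : Submodule E M),
          (4:A)^m • V^m • W^m • (v:M)
            = (∏ j ∈ Finset.range m, ((ℓ:ℤ)^2 - (k - 2*(j:ℤ))^2)) • (v:M) + ((u v : M)) := by
    intro n₀ b d V W B hVW hCW hCB hBW hBweight hsq
    obtain ⟨q, hnq, hHq, hq⟩ := key V W B b d hVW hCW hCB hBW m
    have hHnq : Commute H ((C - (ℓ:A)^2) * q) := hHn.mul_right hHq
    have hmem : ∀ v : ↥(weightSpace H n₀ : Submodule E M),
        ((C - (ℓ:A)^2) * q) • (v:M) ∈ (weightSpace H n₀ : Submodule E M) := by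
      intro v
      have hv : H • (v:M) = n₀ • (v:M) := v.2
      show H • (((C - (ℓ:A)^2) * q) • (v:M)) = n₀ • (((C - (ℓ:A)^2) * q) • (v:M))
      rw [← mul_smul, hHnq.eq, mul_smul, hv, hsmulZ]
    let u : ↥(weightSpace H n₀ : Submodule E M) →ₗ[E] ↥(weightSpace H n₀ : Submodule E M) :=
      { toFun := fun v => ⟨((C - (ℓ:A)^2) * q) • (v:M), hmem v⟩
        map_add' := by intro v w; ext; simp [smul_add]
        map_smul' := by intro e v; ext; simp [hsmulE] }
    have hu : ∀ v, ((u v : M)) = ((C - (ℓ:A)^2) * q) • (v:M) := fun v => rfl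
    have hupow : ∀ (i : ℕ) (v : ↥(weightSpace H n₀ : Submodule E M)),
        (((u^i) v : M)) = (((C - (ℓ:A)^2) * q)^i) • (v:M) := by
      intro i
      induction i with
      | zero => intro v; simp
      | succ i ih =>
        intro v
        calc (((u^(i+1)) v : M)) = (((u^i) (u v)) : M) := by
              rw [pow_succ, Module.End.mul_apply]
          _ = (((C - (ℓ:A)^2) * q)^i) • ((u v : M)) := ih (u v)
          _ = (((C - (ℓ:A)^2) * q)^i) • (((C - (ℓ:A)^2) * q) • (v:M)) := by rw [hu]
          _ = (((C - (ℓ:A)^2) * q)^(i+1)) • (v:M) := by rw [← mul_smul, ← pow_succ]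
    refine ⟨u, ⟨N, ?_⟩, ?_⟩
    · ext v
      show (((u^N) v : M)) = ((0 : ↥(weightSpace H n₀ : Submodule E M) →ₗ[E] _) v : M)
      rw [hupow, (hnq.mul_pow N), mul_smul]
      simpa using hchar ((q^N) • (v:M))
    · intro v
      have hv : H • (v:M) = n₀ • (v:M) := v.2
      have hBv : B • (v:M) = ((b:ℤ):A) • (v:M) := hBweight (v:M) hv
      rw [hq (v:M) hBv, hu]
      congr 1
      rw [Int.cast_smul_eq_zsmul]
      congr 1
      exact Finset.prod_congr rfl (fun j _ => hsq j)
  constructor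
  · refine main (k+1) k (-2) X Y (H-1) ?_ hCY ?_ ?_ ?_ ?_
    · rw [hC]; noncomm_ring
    · exact hCH.sub_right (Commute.one_right C)
    · push_cast
      linear_combination (norm := noncomm_ring) hHY
    · intro w hw
      have hw' : H • w = (((k+1:ℤ)):A) • w := by rw [Int.cast_smul_eq_zsmul]; exact hw
      have hcast : (((k+1:ℤ)):A) = ((k:ℤ):A) + 1 := by push_cast; noncomm_ring
      rw [sub_smul, one_smul, hw', hcast, add_smul, one_smul, add_sub_cancel_right]
    · intro j; ring
  · refine main (-(k+1)) (-k) 2 Y X (H+1) ?_ hCX ?_ ?_ ?_ ?_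
    · rw [hC]
      linear_combination (norm := noncomm_ring) -4*hXY
    · exact hCH.add_right (Commute.one_right C)
    · push_cast
      linear_combination (norm := noncomm_ring) hHX
    · intro w hw
      have hw' : H • w = (((-(k+1):ℤ)):A) • w := by rw [Int.cast_smul_eq_zsmul]; exact hw
      have hcast : ((-k:ℤ):A) = (((-(k+1):ℤ)):A) + 1 := by push_cast; abel
      rw [add_smul, one_smul, hw', hcast, add_smul, one_smul]
    · intro j; ring
end

section
/- Let E be a field of characteristic 0, A an associative unital E-algebra containing elements H, X, Y with HX − XH = 2X, HY − YH = −2Y, XY − YX = H, and C := H² − 2H + 4XY + 1. Let M be a left A-module, ℓ ≥ 1 an integer, and suppose there is N ≥ 1 such that (C − ℓ²)^N · v = 0 for all v ∈ M. Then: (1) the map T : v ↦ X^{ℓ−1} · (Y^{ℓ−1} · v) sends M_{ℓ−1} into M_{ℓ−1}, and T = ((ℓ−1)!)² · id_{M_{ℓ−1}} + n with n nilpotent; (2) the map S : v ↦ Y^{ℓ−1} · (X^{ℓ−1} · v) sends M_{−(ℓ−1)} into M_{−(ℓ−1)}, and S = ((ℓ−1)!)² · id_{M_{−(ℓ−1)}}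 + n' with n' nilpotent; (3) T and S are bijective, and consequently the linear maps X^{ℓ−1} : M_{−(ℓ−1)} → M_{ℓ−1} and Y^{ℓ−1} : M_{ℓ−1} → M_{−(ℓ−1)} are bijective. -/
section Helpers

variable {A : Type*} [Ring A] {M : Type*} [AddCommGroup M] [Module A M]

private lemma smul_swap' (a b : A) (h : a * b = b * a) (w : M) :
    a • b • w = b • a • w := by rw [← mul_smul, h, mul_smul]

private lemma commCX (H X Y C : A)
    (hHX : H * X - X * H = 2 * X) (hXY : X * Y - Y * X = H)
    (hC : C = H ^ 2 - 2 * H + 4 * (X * Y) + 1) : Commute C X := by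
  have key : C * X - X * C
      = H * ((H * X - X * H) - 2 * X) + ((H * X - X * H) - 2 * X) * H
        - 4 * (X * ((X * Y - Y * X) - H)) := by
    rw [hC]; noncomm_ring
  have h0 : C * X - X * C = 0 := by rw [key, hHX, hXY]; noncomm_ring
  exact sub_eq_zero.mp h0

private lemma commCH (H X Y C : A)
    (hHX : H * X - X * H = 2 * X) (hHY : H * Y - Y * H = -2 * Y)
    (hC : C = H ^ 2 - 2 * H + 4 * (X * Y) + 1) : Commute C H := by
  have key : H * C - C * H
      = 4 * (((H * X - X * H) - 2 * X) * Y + X * ((H * Y - Y * H) + 2 * Y)) := by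
    rw [hC]; noncomm_ring
  have h0 : H * C - C * H = 0 := by rw [key, hHX, hHY]; noncomm_ring
  exact (sub_eq_zero.mp h0).symm

private lemma four_XY (H X Y C : A)
    (hC : C = H ^ 2 - 2 * H + 4 * (X * Y) + 1) :
    (4 : A) * (X * Y) = C - (H - 1) ^ 2 := by
  rw [hC]; noncomm_ring

private lemma weight_raise (H X : A) (hHX : H * X - X * H = 2 * X)
    (m : ℤ) (u : M) (hu : H • u = m • u) : H • (X • u) = (m + 2) • (X • u) := by
  have h1 : H * X = 2 * X + X * H := sub_eq_iff_eq_add.mp hHX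
  have h2 : ((2 : A)) • (X • u) = (2 : ℤ) • (X • u) := by
    rw [show ((2 : A)) = (((2 : ℤ) : A)) by norm_num, Int.cast_smul_eq_zsmul]
  calc H • (X • u) = (H * X) • u := (mul_smul H X u).symm
    _ = (2 * X) • u + (X * H) • u := by rw [h1, add_smul]
    _ = (2 : A) • (X • u) + X • (H • u) := by rw [mul_smul, mul_smul]
    _ = (2 : ℤ) • (X • u) + m • (X • u) := by rw [h2, hu, ← smul_comm m X u]
    _ = (m + 2) • (X • u) := by rw [add_smul]; abel

private lemma weight_lower (H Y : A) (hHY : H * Y - Y * H = -2 * Y)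
    (m : ℤ) (u : M) (hu : H • u = m • u) : H • (Y • u) = (m - 2) • (Y • u) := by
  have h1 : H * Y = -2 * Y + Y * H := sub_eq_iff_eq_add.mp hHY
  have h2 : ((-2 : A)) • (Y • u) = (-2 : ℤ) • (Y • u) := by
    rw [show ((-2 : A)) = (((-2 : ℤ) : A)) by norm_num, Int.cast_smul_eq_zsmul]
  calc H • (Y • u) = (H * Y) • u := (mul_smul H Y u).symm
    _ = (-2 * Y) • u + (Y * H) • u := by rw [h1, add_smul]
    _ = (-2 : A) • (Y • u) + Y • (H • u) := by rw [mul_smul, mul_smul]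
    _ = (-2 : ℤ) • (Y • u) + m • (Y • u) := by rw [h2, hu, ← smul_comm m Y u]
    _ = (m - 2) • (Y • u) := by rw [sub_smul]; abel

private lemma weight_raise_pow (H X : A) (hHX : H * X - X * H = 2 * X) (k : ℕ) :
    ∀ (m : ℤ) (u : M), H • u = m • u → H • (X ^ k • u) = (m + 2 * (k : ℤ)) • (X ^ k • u) := by
  induction k with
  | zero => intro m u hu; simpa using hu
  | succ k ih =>
    intro m u hu
    have h1 : X ^ (k + 1) • u = X • (X ^ k • u) := by rw [pow_succ', mul_smul]
    have h2 := weight_raise H X hHX (m + 2 * (k : ℤ)) (X ^ k • u) (ih m u hu)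
    rw [h1, h2]
    have h3 : (m + 2 * (k : ℤ) + 2) = m + 2 * ((k : ℤ) + 1) := by ring
    rw [h3]
    norm_cast

private lemma weight_lower_pow (H Y : A) (hHY : H * Y - Y * H = -2 * Y) (k : ℕ) :
    ∀ (m : ℤ) (u : M), H • u = m • u → H • (Y ^ k • u) = (m - 2 * (k : ℤ)) • (Y ^ k • u) := by
  induction k with
  | zero => intro m u hu; simpa using hu
  | succ k ih =>
    intro m u hu
    have h1 : Y ^ (k + 1) • u = Y • (Y ^ k • u) := by rw [pow_succ', mul_smul]
    have h2 := weight_lower H Y hHY (m - 2 * (k : ℤ)) (Y ^ k • u) (ih m u hu)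
    rw [h1, h2]
    have h3 : (m - 2 * (k : ℤ) - 2) = m - 2 * ((k : ℤ) + 1) := by ring
    rw [h3]
    norm_cast

end Helpers


section Helpers2

variable {A : Type*} [Ring A] {M : Type*} [AddCommGroup M] [Module A M]

private lemma smul_swap'' (a b : A) (h : a * b = b * a) (w : M) :
    a • b • w = b • a • w := by rw [← mul_smul, h, mul_smul]

private lemma commute_list_prod (k : ℕ) (f : ℕ → A) (a : A)
    (h : ∀ j, j < k → Commute a (f j)) :
    Commute a (((List.range k).map f).prod) := by
  apply Commute.list_prod_right
  intro x hx
  obtain ⟨j, hj, rfl⟩ := List.mem_map.mp hx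
  exact h j (List.mem_range.mp hj)

private lemma prod_factor (d : A) (b : ℕ → ℕ) (k : ℕ) :
    ∃ R : A,
      ((List.range k).map (fun j => d + ((b j : ℕ) : A))).prod
        = ((∏ j ∈ Finset.range k, b j : ℕ) : A) + d * R
      ∧ ∀ z : A, Commute z d → Commute z R := by
  induction k with
  | zero => exact ⟨0, by simp, fun z _ => Commute.zero_right z⟩
  | succ k ih =>
    obtain ⟨R, hR, hcomm⟩ := ih
    refine ⟨((∏ j ∈ Finset.range k, b j : ℕ) : A) + R * d + R * ((b k : ℕ) : A), ?_, ?_⟩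
    · rw [List.prod_range_succ, hR, Finset.prod_range_succ]
      have hpd : ((∏ j ∈ Finset.range k, b j : ℕ) : A) * d
          = d * ((∏ j ∈ Finset.range k, b j : ℕ) : A) := (Nat.cast_commute _ d).eq
      calc (((∏ j ∈ Finset.range k, b j : ℕ) : A) + d * R) * (d + ((b k : ℕ) : A))
          = ((∏ j ∈ Finset.range k, b j : ℕ) : A) * d
            + ((∏ j ∈ Finset.range k, b j : ℕ) : A) * ((b k : ℕ) : A)
            + d * (R * d) + d * (R * ((b k : ℕ) : A)) := by noncomm_ring
        _ = (((∏ j ∈ Finset.range k, b j) * b k : ℕ) : A)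
            + d * (((∏ j ∈ Finset.range k, b j : ℕ) : A) + R * d + R * ((b k : ℕ) : A)) := by
            rw [hpd]; push_cast; noncomm_ring
    · intro z hz
      have c1 : Commute z ((∏ j ∈ Finset.range k, b j : ℕ) : A) :=
        (Nat.cast_commute _ z).symm
      have c2 : Commute z (R * d) := (hcomm z hz).mul_right hz
      have c3 : Commute z (R * ((b k : ℕ) : A)) :=
        (hcomm z hz).mul_right ((Nat.cast_commute _ z).symm)
      exact (c1.add_right c2).add_right c3

end Helpers2

section MainInd
variable {A : Type*} [Ring A] {M : Type*} [AddCommGroup M] [Module A M]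

private lemma main_ind (H X Y C : A) (hCX : Commute C X)
    (hHY : H * Y - Y * H = -2 * Y)
    (h4 : (4 : A) * (X * Y) = C - (H - 1) ^ 2)
    (n : ℤ) (k : ℕ) :
    ∀ (v : M), H • v = n • v →
      ((4 : A) ^ k) • (X ^ k • (Y ^ k • v))
        = (((List.range k).map (fun (j : ℕ) => C - (((n - 1 - 2 * (j : ℤ)) ^ 2 : ℤ) : A))).prod) • v := by
  induction k with
  | zero => intro v hv; simp
  | succ k ih =>
    intro v hv
    have hwt : H • (Y ^ k • v) = (n - 2 * (k : ℤ)) • (Y ^ k • v) :=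
      weight_lower_pow H Y hHY k n v hv
    -- (H-1) acts on w := Y^k • v by (n - 2k - 1)
    have hs1 : (H - 1) • (Y ^ k • v) = (n - 2 * (k : ℤ) - 1) • (Y ^ k • v) := by
      have e1 : (H - 1) • (Y ^ k • v) = (n - 2 * (k : ℤ)) • (Y ^ k • v) - (Y ^ k • v) := by
        rw [sub_smul, hwt, one_smul]
      rw [e1, sub_smul (n - 2 * (k : ℤ)) 1 (Y ^ k • v), one_smul]
    have hs2 : ((H - 1) ^ 2) • (Y ^ k • v)
        = ((n - 2 * (k : ℤ) - 1) ^ 2) • (Y ^ k • v) := by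
      rw [pow_two, mul_smul, hs1, ← smul_comm (n - 2 * (k : ℤ) - 1) (H - 1), hs1,
        smul_smul, ← pow_two]
    have hc : (n - 2 * (k : ℤ) - 1) ^ 2 = (n - 1 - 2 * (k : ℤ)) ^ 2 := by ring
    rw [hc] at hs2
    set c : ℤ := (n - 1 - 2 * (k : ℤ)) ^ 2 with hcdef
    -- step identity
    have h3 : (4 : A) • (X • (Y • (Y ^ k • v))) = (C - ((c : ℤ) : A)) • (Y ^ k • v) := by
      calc (4 : A) • (X • (Y • (Y ^ k • v))) = ((4 : A) * (X * Y)) • (Y ^ k • v) := by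
            rw [mul_smul, mul_smul]
        _ = (C - (H - 1) ^ 2) • (Y ^ k • v) := by rw [h4]
        _ = C • (Y ^ k • v) - (c : ℤ) • (Y ^ k • v) := by rw [sub_smul, hs2]
        _ = (C - ((c : ℤ) : A)) • (Y ^ k • v) := by
            rw [sub_smul, Int.cast_smul_eq_zsmul]
    have hXsucc : X ^ (k + 1) • (Y ^ (k + 1) • v) = X ^ k • (X • (Y • (Y ^ k • v))) := by
      rw [pow_succ X k, pow_succ' Y k, mul_smul, mul_smul]
    have hcomm1 : X ^ k * (C - ((c : ℤ) : A)) = (C - ((c : ℤ) : A)) * X ^ k :=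
      ((hCX.symm.pow_left k).sub_right ((Int.cast_commute c (X ^ k)).symm)).eq
    have hcomm4 : (4 : A) * X ^ k = X ^ k * (4 : A) := (Commute.ofNat_left 4 (X ^ k)).eq
    have hcomm4' : (4 : A) ^ k * (C - ((c : ℤ) : A)) = (C - ((c : ℤ) : A)) * (4 : A) ^ k :=
      (Commute.ofNat_left 4 (C - ((c : ℤ) : A))).pow_left k |>.eq
    have hprodcomm : Commute (C - ((c : ℤ) : A))
        (((List.range k).map (fun (j : ℕ) => C - (((n - 1 - 2 * (j : ℤ)) ^ 2 : ℤ) : A))).prod) := by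
      apply commute_list_prod
      intro j hj
      exact ((Commute.refl C).sub_right
          ((Int.cast_commute _ C).symm)).sub_left (Int.cast_commute _ _)
    calc (4 : A) ^ (k + 1) • (X ^ (k + 1) • (Y ^ (k + 1) • v))
        = (4 : A) ^ k • ((4 : A) • (X ^ k • (X • (Y • (Y ^ k • v))))) := by
          rw [hXsucc, pow_succ, mul_smul]
      _ = (4 : A) ^ k • (X ^ k • ((4 : A) • (X • (Y • (Y ^ k • v))))) := by
          rw [smul_swap' (4 : A) (X ^ k) hcomm4]
      _ = (4 : A) ^ k • (X ^ k • ((C - ((c : ℤ) : A)) • (Y ^ k • v))) := by rw [h3]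
      _ = (4 : A) ^ k • ((C - ((c : ℤ) : A)) • (X ^ k • (Y ^ k • v))) := by
          rw [smul_swap' (X ^ k) (C - ((c : ℤ) : A)) hcomm1]
      _ = (C - ((c : ℤ) : A)) • ((4 : A) ^ k • (X ^ k • (Y ^ k • v))) := by
          rw [smul_swap' ((4 : A) ^ k) (C - ((c : ℤ) : A)) hcomm4']
      _ = (C - ((c : ℤ) : A)) •
          ((((List.range k).map (fun (j : ℕ) => C - (((n - 1 - 2 * (j : ℤ)) ^ 2 : ℤ) : A))).prod) • v) := by
          rw [ih v hv]
      _ = (((List.range (k + 1)).map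
            (fun (j : ℕ) => C - (((n - 1 - 2 * (j : ℤ)) ^ 2 : ℤ) : A))).prod) • v := by
          rw [List.prod_range_succ, ← hprodcomm.eq, mul_smul]

end MainInd

private theorem core {E : Type*} [Field E] [CharZero E]
    {A : Type*} [Ring A] [Algebra E A] (H X Y : A)
    (hHX : H * X - X * H = 2 * X) (hHY : H * Y - Y * H = -2 * Y)
    (hXY : X * Y - Y * X = H)
    (C : A) (hC : C = H ^ 2 - 2 * H + 4 * (X * Y) + 1)
    {M : Type*} [AddCommGroup M] [Module E M] [Module A M] [IsScalarTower E A M]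
    (ℓ : ℕ) (hℓ : 1 ≤ ℓ) (N : ℕ)
    (hchar : ∀ v : M, ((C - ((ℓ : A)) ^ 2) ^ N) • v = 0) :
    (∃ u : ↥(weightSpace H ((ℓ : ℤ) - 1) : Submodule E M) →ₗ[E]
          ↥(weightSpace H ((ℓ : ℤ) - 1) : Submodule E M),
      IsNilpotent u ∧
      ∀ v : ↥(weightSpace H ((ℓ : ℤ) - 1) : Submodule E M),
        X ^ (ℓ - 1) • Y ^ (ℓ - 1) • (v : M)
          = ((Nat.factorial (ℓ - 1)) ^ 2) • (v : M) + ((u v : M))) ∧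
    (∃ hT : ∀ v ∈ (weightSpace H ((ℓ : ℤ) - 1) : Submodule E M),
        X ^ (ℓ - 1) • Y ^ (ℓ - 1) • v ∈ (weightSpace H ((ℓ : ℤ) - 1) : Submodule E M),
      Function.Bijective
        (fun v : ↥(weightSpace H ((ℓ : ℤ) - 1) : Submodule E M) =>
          (⟨X ^ (ℓ - 1) • Y ^ (ℓ - 1) • (v : M), hT v v.2⟩ :
            ↥(weightSpace H ((ℓ : ℤ) - 1) : Submodule E M)))) := by
  have hCX : Commute C X := commCX H X Y C hHX hXY hC
  have hCH : Commute C H := commCH H X Y C hHX hHY hC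
  have h4 : (4 : A) * (X * Y) = C - (H - 1) ^ 2 := four_XY H X Y C hC
  set k := ℓ - 1 with hkdef
  have hkℓ : (k : ℤ) = (ℓ : ℤ) - 1 := by
    rw [hkdef]; push_cast [Nat.cast_sub hℓ]; ring
  set d : A := C - ((ℓ : A)) ^ 2 with hd
  obtain ⟨R, hR, hRcomm⟩ := prod_factor (A := A) d (fun j => 4 * (j + 1) * (k - j)) k
  -- the scalar product value
  have hrefl : (∏ j ∈ Finset.range k, (k - j)) = Nat.factorial k := by
    calc ∏ j ∈ Finset.range k, (k - j)
        = ∏ j ∈ Finset.range k, ((k - 1 - j) + 1) := by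
          apply Finset.prod_congr rfl
          intro j hj
          have := Finset.mem_range.mp hj
          omega
      _ = Nat.factorial k := by
          rw [Finset.prod_range_reflect (fun j => j + 1) k,
            Finset.prod_range_add_one_eq_factorial]
  have hprodnat : (∏ j ∈ Finset.range k, (4 * (j + 1) * (k - j)))
      = 4 ^ k * (Nat.factorial k) ^ 2 := by
    calc ∏ j ∈ Finset.range k, 4 * (j + 1) * (k - j)
        = (∏ _j ∈ Finset.range k, 4) * (∏ j ∈ Finset.range k, (j + 1))
            * (∏ j ∈ Finset.range k, (k - j)) := by
          rw [← Finset.prod_mul_distrib, ← Finset.prod_mul_distrib]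
      _ = 4 ^ k * Nat.factorial k * Nat.factorial k := by
          rw [Finset.prod_const, Finset.prod_range_add_one_eq_factorial, hrefl,
            Finset.card_range]
      _ = 4 ^ k * (Nat.factorial k) ^ 2 := by ring
  -- matching the factors
  have hfac : ((List.range k).map
        (fun (j : ℕ) => C - (((((ℓ : ℤ) - 1) - 1 - 2 * (j : ℤ)) ^ 2 : ℤ) : A)))
      = ((List.range k).map (fun j => d + ((4 * (j + 1) * (k - j) : ℕ) : A))) := by
    apply List.map_congr_left
    intro j hj
    have hj' : j < k := List.mem_range.mp hj
    have hz : ((4 * (j + 1) * (k - j) : ℕ) : ℤ)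
        = (ℓ : ℤ) ^ 2 - (((ℓ : ℤ) - 1) - 1 - 2 * (j : ℤ)) ^ 2 := by
      push_cast [Nat.cast_sub hj'.le]
      rw [hkℓ]; ring
    have hb : ((4 * (j + 1) * (k - j) : ℕ) : A)
        = (((ℓ : ℤ) ^ 2 - (((ℓ : ℤ) - 1) - 1 - 2 * (j : ℤ)) ^ 2 : ℤ) : A) := by
      rw [← hz]; push_cast; ring
    rw [hb, hd]
    push_cast
    noncomm_ring
  -- key identity with nat smul
  have keyv : ∀ v : M, H • v = ((ℓ : ℤ) - 1) • v →
      (4 ^ k : ℕ) • (X ^ k • (Y ^ k • v))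
        = ((4 ^ k * (Nat.factorial k) ^ 2 : ℕ)) • v + (d * R) • v := by
    intro v hv
    have h1 := main_ind (M := M) H X Y C hCX hHY h4 ((ℓ : ℤ) - 1) k v hv
    rw [hfac, hR, hprodnat] at h1
    have h2 : ((4 : A)) ^ k = (((4 ^ k : ℕ)) : A) := by push_cast; ring
    rw [h2, Nat.cast_smul_eq_nsmul, add_smul, Nat.cast_smul_eq_nsmul] at h1
    exact h1
  set W := (weightSpace H ((ℓ : ℤ) - 1) : Submodule E M) with hW
  have hmemW : ∀ v : M, v ∈ W ↔ H • v = ((ℓ : ℤ) - 1) • v := fun v => Iff.rfl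
  have hEcomm : ∀ (a : A) (e : E) (w : M), a • (e • w) = e • (a • w) := by
    intro a e w
    rw [← algebraMap_smul A e w, ← mul_smul, ← Algebra.commutes, mul_smul, algebraMap_smul]
  have hconv : ∀ (m : ℕ) (w : M), (m • w) = ((m : E)) • w :=
    fun m w => (Nat.cast_smul_eq_nsmul E m w).symm
  have hg : ((4 : E) ^ k) ≠ 0 := pow_ne_zero _ (by norm_num)
  -- d * R preserves W
  have hHd : Commute H d := by
    have h1 : Commute H ((ℓ : A) ^ 2) := ((Nat.cast_commute ℓ H).symm).pow_right 2
    exact (hCH.symm).sub_right h1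
  have hHdR : H * (d * R) = (d * R) * H := (hHd.mul_right (hRcomm H hHd)).eq
  have hdRmem : ∀ v : M, v ∈ W → (d * R) • v ∈ W := by
    intro v hv
    have hv' : H • v = ((ℓ : ℤ) - 1) • v := hv
    show H • ((d * R) • v) = ((ℓ : ℤ) - 1) • ((d * R) • v)
    rw [← mul_smul, hHdR, mul_smul, hv', smul_comm]
  have humem : ∀ v : ↥W, (((4 : E) ^ k)⁻¹) • ((d * R) • (v : M)) ∈ W :=
    fun v => W.smul_mem _ (hdRmem _ v.2)
  set u : ↥W →ₗ[E] ↥W :=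
    { toFun := fun v => ⟨(((4 : E) ^ k)⁻¹) • ((d * R) • (v : M)), humem v⟩
      map_add' := by
        intro a b
        apply Subtype.ext
        simp [smul_add]
      map_smul' := by
        intro e v
        apply Subtype.ext
        simp only [Submodule.coe_smul, RingHom.id_apply]
        rw [hEcomm, smul_comm (((4 : E) ^ k)⁻¹) e] } with hu
  have huapp : ∀ v : ↥W, ((u v : M)) = (((4 : E) ^ k)⁻¹) • ((d * R) • (v : M)) := fun v => rfl
  -- nilpotency
  have hupow : ∀ (m : ℕ) (v : ↥W), ((u ^ m) v : M) = (((4 : E) ^ k)⁻¹) ^ m • ((d * R) ^ m • (v : M)) := by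
    intro m
    induction m with
    | zero => intro v; simp
    | succ m ih =>
      intro v
      rw [pow_succ, Module.End.mul_apply, ih (u v), huapp v]
      rw [hEcomm ((d * R) ^ m) (((4 : E) ^ k)⁻¹),
        smul_smul ((((4 : E) ^ k)⁻¹) ^ m) (((4 : E) ^ k)⁻¹), ← pow_succ,
        ← mul_smul, ← pow_succ]
  have hdR : Commute d R := hRcomm d (Commute.refl d)
  have hunil : IsNilpotent u := by
    refine ⟨N, ?_⟩
    apply LinearMap.ext
    intro v
    apply Subtype.ext
    rw [hupow N v]
    have h0 : (d * R) ^ N • (v : M) = 0 := by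
      rw [hdR.mul_pow, mul_smul, hchar]
    rw [h0, smul_zero]
    simp
  -- main formula
  have hfactE : ((Nat.factorial k : E)) ^ 2 = (((Nat.factorial k ^ 2 : ℕ)) : E) := by
    push_cast; ring
  have hmain : ∀ v : ↥W,
      X ^ k • Y ^ k • (v : M) = ((Nat.factorial k) ^ 2) • (v : M) + ((u v : M)) := by
    intro v
    have hv : H • (v : M) = ((ℓ : ℤ) - 1) • (v : M) := v.2
    have h1 := keyv (v : M) hv
    rw [hconv (4 ^ k), hconv (4 ^ k * Nat.factorial k ^ 2)] at h1
    push_cast at h1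
    have h3 : X ^ k • Y ^ k • (v : M)
        = (((Nat.factorial k : E)) ^ 2) • (v : M)
          + (((4 : E) ^ k)⁻¹) • ((d * R) • (v : M)) := by
      calc X ^ k • Y ^ k • (v : M)
          = (((4 : E) ^ k)⁻¹) • (((4 : E) ^ k) • (X ^ k • Y ^ k • (v : M))) := by
            rw [smul_smul (((4 : E) ^ k)⁻¹) ((4 : E) ^ k), inv_mul_cancel₀ hg, one_smul]
        _ = (((4 : E) ^ k)⁻¹) • (((4 : E) ^ k * ((Nat.factorial k : E)) ^ 2) • (v : M)
              + (d * R) • (v : M)) := by rw [h1]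
        _ = (((Nat.factorial k : E)) ^ 2) • (v : M)
              + (((4 : E) ^ k)⁻¹) • ((d * R) • (v : M)) := by
            rw [smul_add, smul_smul (((4 : E) ^ k)⁻¹) ((4 : E) ^ k * ((Nat.factorial k : E)) ^ 2),
              ← mul_assoc, inv_mul_cancel₀ hg, one_mul]
    rw [h3, hfactE, Nat.cast_smul_eq_nsmul, huapp v]
  -- part 3 : membership
  have hT : ∀ v ∈ W, X ^ k • Y ^ k • v ∈ W := by
    intro v hv
    have h : X ^ k • Y ^ k • v = (Nat.factorial k) ^ 2 • v + ((u ⟨v, hv⟩ : M)) :=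
      hmain ⟨v, hv⟩
    rw [h]
    refine W.add_mem ?_ (u ⟨v, hv⟩).2
    rw [hconv]
    exact W.smul_mem _ hv
  -- bijectivity
  set c : E := ((Nat.factorial k ^ 2 : ℕ) : E) with hcdef
  have hcne : c ≠ 0 := Nat.cast_ne_zero.mpr (by positivity)
  set Tlin : ↥W →ₗ[E] ↥W := algebraMap E (Module.End E ↥W) c + u with hTlin
  have hTu : IsUnit Tlin := by
    refine IsNilpotent.isUnit_add_left_of_commute hunil ?_ ?_
    · exact (isUnit_iff_ne_zero.mpr hcne).map (algebraMap E (Module.End E ↥W))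
    · exact (Algebra.commutes c u).symm
  have hbij : Function.Bijective Tlin := (Module.End.isUnit_iff Tlin).mp hTu
  have hfun : (fun v : ↥W => (⟨X ^ k • Y ^ k • (v : M), hT (v : M) v.2⟩ : ↥W)) = ⇑Tlin := by
    funext v
    apply Subtype.ext
    show X ^ k • Y ^ k • (v : M) = ((Tlin v : M))
    rw [hTlin]
    rw [LinearMap.add_apply]
    rw [Submodule.coe_add, Module.algebraMap_end_apply]
    rw [hmain v]
    congr 1
    rw [Submodule.coe_smul, hcdef, Nat.cast_smul_eq_nsmul]
  refine ⟨⟨u, hunil, hmain⟩, ⟨hT, ?_⟩⟩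
  rw [hfun]
  exact hbij


/-- Let `E` be a field of characteristic `0`, `A` an associative unital
`E`-algebra with elements `H, X, Y` satisfying the `sl₂` relations and Casimir
element `C = H² − 2H + 4XY + 1`, let `ℓ ≥ 1` and let `M` be a left `A`-module
on which `(C − ℓ²)^N` acts by zero for some `N ≥ 1`. Then:
(1) `T : v ↦ X^{ℓ−1}·(Y^{ℓ−1}·v)` sends `M_{ℓ−1}` into itself and equals
`((ℓ−1)!)²·id + n` with `n` a nilpotent endomorphism of `M_{ℓ−1}`;
(2) `S : v ↦ Y^{ℓ−1}·(X^{ℓ−1}·v)` sends `M_{−(ℓ−1)}` into itself and equals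
`((ℓ−1)!)²·id + n'` with `n'` nilpotent;
(3) `T` and `S` are bijective, and consequently
`X^{ℓ−1} : M_{−(ℓ−1)} → M_{ℓ−1}` and `Y^{ℓ−1} : M_{ℓ−1} → M_{−(ℓ−1)}` are
(well-defined and) bijective. -/
theorem stmt_14 (E : Type*) [Field E] [CharZero E]
    (A : Type*) [Ring A] [Algebra E A] (H X Y : A)
    (hHX : H * X - X * H = 2 * X) (hHY : H * Y - Y * H = -2 * Y)
    (hXY : X * Y - Y * X = H)
    (C : A) (hC : C = H ^ 2 - 2 * H + 4 * (X * Y) + 1)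
    (M : Type*) [AddCommGroup M] [Module E M] [Module A M] [IsScalarTower E A M]
    (ℓ : ℕ) (hℓ : 1 ≤ ℓ) (N : ℕ) (hN : 1 ≤ N)
    (hchar : ∀ v : M, ((C - ((ℓ : A)) ^ 2) ^ N) • v = 0) :
    (∃ u : ↥(weightSpace H ((ℓ : ℤ) - 1) : Submodule E M) →ₗ[E]
          ↥(weightSpace H ((ℓ : ℤ) - 1) : Submodule E M),
      IsNilpotent u ∧
      ∀ v : ↥(weightSpace H ((ℓ : ℤ) - 1) : Submodule E M),
        X ^ (ℓ - 1) • Y ^ (ℓ - 1) • (v : M)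
          = ((Nat.factorial (ℓ - 1)) ^ 2) • (v : M) + ((u v : M))) ∧
    (∃ u' : ↥(weightSpace H (-((ℓ : ℤ) - 1)) : Submodule E M) →ₗ[E]
          ↥(weightSpace H (-((ℓ : ℤ) - 1)) : Submodule E M),
      IsNilpotent u' ∧
      ∀ v : ↥(weightSpace H (-((ℓ : ℤ) - 1)) : Submodule E M),
        Y ^ (ℓ - 1) • X ^ (ℓ - 1) • (v : M)
          = ((Nat.factorial (ℓ - 1)) ^ 2) • (v : M) + ((u' v : M))) ∧
    (∃ hT : ∀ v ∈ (weightSpace H ((ℓ : ℤ) - 1) : Submodule E M),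
        X ^ (ℓ - 1) • Y ^ (ℓ - 1) • v ∈ (weightSpace H ((ℓ : ℤ) - 1) : Submodule E M),
      Function.Bijective
        (fun v : ↥(weightSpace H ((ℓ : ℤ) - 1) : Submodule E M) =>
          (⟨X ^ (ℓ - 1) • Y ^ (ℓ - 1) • (v : M), hT v v.2⟩ :
            ↥(weightSpace H ((ℓ : ℤ) - 1) : Submodule E M)))) ∧
    (∃ hS : ∀ v ∈ (weightSpace H (-((ℓ : ℤ) - 1)) : Submodule E M),
        Y ^ (ℓ - 1) • X ^ (ℓ - 1) • v ∈ (weightSpace H (-((ℓ : ℤ) - 1)) : Submodule E M),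
      Function.Bijective
        (fun v : ↥(weightSpace H (-((ℓ : ℤ) - 1)) : Submodule E M) =>
          (⟨Y ^ (ℓ - 1) • X ^ (ℓ - 1) • (v : M), hS v v.2⟩ :
            ↥(weightSpace H (-((ℓ : ℤ) - 1)) : Submodule E M)))) ∧
    (∃ hX : ∀ v ∈ (weightSpace H (-((ℓ : ℤ) - 1)) : Submodule E M),
        X ^ (ℓ - 1) • v ∈ (weightSpace H ((ℓ : ℤ) - 1) : Submodule E M),
      Function.Bijective
        (fun v : ↥(weightSpace H (-((ℓ : ℤ) - 1)) : Submodule E M) =>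
          (⟨X ^ (ℓ - 1) • (v : M), hX v v.2⟩ :
            ↥(weightSpace H ((ℓ : ℤ) - 1) : Submodule E M)))) ∧
    (∃ hY : ∀ v ∈ (weightSpace H ((ℓ : ℤ) - 1) : Submodule E M),
        Y ^ (ℓ - 1) • v ∈ (weightSpace H (-((ℓ : ℤ) - 1)) : Submodule E M),
      Function.Bijective
        (fun v : ↥(weightSpace H ((ℓ : ℤ) - 1) : Submodule E M) =>
          (⟨Y ^ (ℓ - 1) • (v : M), hY v v.2⟩ :
            ↥(weightSpace H (-((ℓ : ℤ) - 1)) : Submodule E M)))) := by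


  obtain ⟨P1, P3⟩ := core (E := E) (M := M) H X Y hHX hHY hXY C hC ℓ hℓ N hchar
  -- swapped data
  have hHX' : (-H) * Y - Y * (-H) = 2 * Y := by
    have h : (-H) * Y - Y * (-H) = -(H * Y - Y * H) := by noncomm_ring
    rw [h, hHY]; noncomm_ring
  have hHY' : (-H) * X - X * (-H) = -2 * X := by
    have h : (-H) * X - X * (-H) = -(H * X - X * H) := by noncomm_ring
    rw [h, hHX]; noncomm_ring
  have hXY' : Y * X - X * Y = -H := by
    have h : Y * X - X * Y = -(X * Y - Y * X) := by noncomm_ring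
    rw [h, hXY]
  have hC' : C = (-H) ^ 2 - 2 * (-H) + 4 * (Y * X) + 1 := by
    have h : (H ^ 2 - 2 * H + 4 * (X * Y) + 1) - ((-H) ^ 2 - 2 * (-H) + 4 * (Y * X) + 1)
        = 4 * ((X * Y - Y * X) - H) := by noncomm_ring
    have h2 : (H ^ 2 - 2 * H + 4 * (X * Y) + 1) - ((-H) ^ 2 - 2 * (-H) + 4 * (Y * X) + 1)
        = 0 := by rw [h, hXY]; noncomm_ring
    rw [hC]
    exact sub_eq_zero.mp h2
  obtain ⟨P2, P4⟩ := core (E := E) (M := M) (-H) Y X hHX' hHY' hXY' C hC' ℓ hℓ N hchar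
  have hsw : (weightSpace (-H) ((ℓ : ℤ) - 1) : Submodule E M)
      = weightSpace H (-((ℓ : ℤ) - 1)) := by
    ext v
    constructor
    · intro hv
      have hv' : (-H) • v = ((ℓ : ℤ) - 1) • v := hv
      show H • v = (-((ℓ : ℤ) - 1)) • v
      rw [neg_smul] at hv'
      rw [neg_smul, ← hv', neg_neg]
    · intro hv
      have hv' : H • v = (-((ℓ : ℤ) - 1)) • v := hv
      show (-H) • v = ((ℓ : ℤ) - 1) • v
      rw [neg_smul] at hv'
      rw [neg_smul, hv', neg_neg]
  rw [hsw] at P2 P4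
  obtain ⟨hT, hTbij⟩ := P3
  obtain ⟨hS, hSbij⟩ := P4
  -- membership maps
  have hXmem : ∀ v ∈ (weightSpace H (-((ℓ : ℤ) - 1)) : Submodule E M),
      X ^ (ℓ - 1) • v ∈ (weightSpace H ((ℓ : ℤ) - 1) : Submodule E M) := by
    intro v hv
    have hv' : H • v = (-((ℓ : ℤ) - 1)) • v := hv
    have h := weight_raise_pow H X hHX (ℓ - 1) (-((ℓ : ℤ) - 1)) v hv'
    have harith : (-((ℓ : ℤ) - 1) + 2 * ((ℓ - 1 : ℕ) : ℤ)) = (ℓ : ℤ) - 1 := by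
      push_cast [Nat.cast_sub hℓ]; ring
    show H • (X ^ (ℓ - 1) • v) = ((ℓ : ℤ) - 1) • (X ^ (ℓ - 1) • v)
    rw [h, harith]
  have hYmem : ∀ v ∈ (weightSpace H ((ℓ : ℤ) - 1) : Submodule E M),
      Y ^ (ℓ - 1) • v ∈ (weightSpace H (-((ℓ : ℤ) - 1)) : Submodule E M) := by
    intro v hv
    have hv' : H • v = ((ℓ : ℤ) - 1) • v := hv
    have h := weight_lower_pow H Y hHY (ℓ - 1) ((ℓ : ℤ) - 1) v hv'
    have harith : ((ℓ : ℤ) - 1 - 2 * ((ℓ - 1 : ℕ) : ℤ)) = -((ℓ : ℤ) - 1) := by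
      push_cast [Nat.cast_sub hℓ]; ring
    show H • (Y ^ (ℓ - 1) • v) = (-((ℓ : ℤ) - 1)) • (Y ^ (ℓ - 1) • v)
    rw [h, harith]
  -- composition identities
  have hcompT : (fun v : ↥(weightSpace H ((ℓ : ℤ) - 1) : Submodule E M) =>
        (⟨X ^ (ℓ - 1) • Y ^ (ℓ - 1) • (v : M), hT v v.2⟩ :
          ↥(weightSpace H ((ℓ : ℤ) - 1) : Submodule E M)))
      = (fun v : ↥(weightSpace H (-((ℓ : ℤ) - 1)) : Submodule E M) =>
          (⟨X ^ (ℓ - 1) • (v : M), hXmem v v.2⟩ :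
            ↥(weightSpace H ((ℓ : ℤ) - 1) : Submodule E M)))
        ∘ (fun v : ↥(weightSpace H ((ℓ : ℤ) - 1) : Submodule E M) =>
          (⟨Y ^ (ℓ - 1) • (v : M), hYmem v v.2⟩ :
            ↥(weightSpace H (-((ℓ : ℤ) - 1)) : Submodule E M))) := by
    funext v
    apply Subtype.ext
    rfl
  have hcompS : (fun v : ↥(weightSpace H (-((ℓ : ℤ) - 1)) : Submodule E M) =>
        (⟨Y ^ (ℓ - 1) • X ^ (ℓ - 1) • (v : M), hS v v.2⟩ :
          ↥(weightSpace H (-((ℓ : ℤ) - 1)) : Submodule E M)))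
      = (fun v : ↥(weightSpace H ((ℓ : ℤ) - 1) : Submodule E M) =>
          (⟨Y ^ (ℓ - 1) • (v : M), hYmem v v.2⟩ :
            ↥(weightSpace H (-((ℓ : ℤ) - 1)) : Submodule E M)))
        ∘ (fun v : ↥(weightSpace H (-((ℓ : ℤ) - 1)) : Submodule E M) =>
          (⟨X ^ (ℓ - 1) • (v : M), hXmem v v.2⟩ :
            ↥(weightSpace H ((ℓ : ℤ) - 1) : Submodule E M))) := by
    funext v
    apply Subtype.ext
    rfl
  rw [hcompT] at hTbij
  rw [hcompS] at hSbij
  refine ⟨P1, P2, ⟨hT, by rw [hcompT]; exact hTbij⟩, ⟨hS, by rw [hcompS]; exact hSbij⟩,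
    ⟨hXmem, ?_, ?_⟩, ⟨hYmem, ?_, ?_⟩⟩
  · exact Function.Injective.of_comp hSbij.1
  · exact Function.Surjective.of_comp hTbij.2
  · exact Function.Injective.of_comp hTbij.1
  · exact Function.Surjective.of_comp hSbij.2
end
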